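/- arXiv:2410.12590 — 9 statements merged into one kernel-verified Lean document; each statement's English description precedes it below -/
import Mathlib

section
/- Let (Ω, 𝓕, μ) be a standard Borel probability space, S : Ω → ℝ a random variable taking values in {0,1}, A : Ω → ℝ a random variable, Z : Ω → ℝ^d a measurable map, and κ : ℝ^d → ℝ measurable with c ≤ κ(z) ≤ 1 for all z, for some constant c > 0, such that κ ∘ Z is a version of E[S | σ(Z)]. If S is conditionally independent of A given σ(Z), then for every bounded measurable h : ℝ × ℝ^d → ℝ, E[(S/κ(Z)) · h(A, Z)] = E[h(A, Z)]. (This is the key inverse-probability-of-sampling-weighting identity behind Theorem 2, part 1.) -/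
/-!
Reweighting `μ` by the density `w = S / κ(Z)` leaves the law of `(A, Z)` unchanged, which is the
identity. Finite measures on a product agree once they agree on rectangles, and on a rectangle
`{A ∈ s, Z ∈ t}` one conditions on `σ(Z)`: `E[S · 1{A ∈ s} | Z] = E[S | Z] · P(A ∈ s | Z)` by
conditional independence, and `E[S | Z] = κ(Z)` cancels the weight, leaving `P(A ∈ s, Z ∈ t)`.
-/

open MeasureTheory ProbabilityTheory

section CondExp

variable {Ω : Type*} {m mΩ : MeasurableSpace Ω} {μ : Measure Ω} [IsFiniteMeasure μ]

theorem integral_mul_condExp_of_bound (hm : m ≤ mΩ) {g f : Ω → ℝ} (hg : StronglyMeasurable[m] g)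
    {C : ℝ} (hgC : ∀ᵐ ω ∂μ, ‖g ω‖ ≤ C) (hf : Integrable f μ) :
    ∫ ω, g ω * μ[f | m] ω ∂μ = ∫ ω, g ω * f ω ∂μ := by
  calc ∫ ω, g ω * μ[f | m] ω ∂μ = ∫ ω, μ[g * f | m] ω ∂μ :=
        integral_congr_ae (condExp_stronglyMeasurable_mul_of_bound hm hg hf C hgC).symm
    _ = ∫ ω, g ω * f ω ∂μ := integral_condExp hm

theorem ProbabilityTheory.CondIndep.integral_mul_indicator_inter [StandardBorelSpace Ω]
    {m₁ m₂ : MeasurableSpace Ω} (hm : m ≤ mΩ) (hm₁ : m₁ ≤ mΩ) (hm₂ : m₂ ≤ mΩ)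
    (hCI : CondIndep m m₁ m₂ hm μ)
    {g : Ω → ℝ} (hg : StronglyMeasurable[m] g) {C : ℝ} (hgC : ∀ᵐ ω ∂μ, ‖g ω‖ ≤ C)
    {E F : Set Ω} (hE : MeasurableSet[m₁] E) (hF : MeasurableSet[m₂] F) :
    ∫ ω, g ω * (E ∩ F).indicator (fun _ => (1 : ℝ)) ω ∂μ
      = ∫ ω, g ω * (μ⟦E | m⟧) ω * F.indicator (fun _ => (1 : ℝ)) ω ∂μ := by
  have hE_le_one : ∀ᵐ ω ∂μ, |(μ⟦E | m⟧) ω| ≤ 1 :=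
    ae_bdd_abs_condExp_of_ae_bdd_abs <| ae_of_all _ fun ω => by
      by_cases hω : ω ∈ E <;> simp [hω]
  have hgE : ∀ᵐ ω ∂μ, ‖g ω * (μ⟦E | m⟧) ω‖ ≤ C * 1 := by
    filter_upwards [hgC, hE_le_one] with ω hgω hEω
    rw [norm_mul]
    exact mul_le_mul hgω (by simpa using hEω) (norm_nonneg _) ((norm_nonneg _).trans hgω)
  have hind : ∀ {s : Set Ω}, MeasurableSet[mΩ] s → Integrable (s.indicator fun _ => (1 : ℝ)) μ :=
    fun hs => (integrable_const 1).indicator hs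
  calc ∫ ω, g ω * (E ∩ F).indicator (fun _ => (1 : ℝ)) ω ∂μ
      = ∫ ω, g ω * (μ⟦E ∩ F | m⟧) ω ∂μ :=
        (integral_mul_condExp_of_bound hm hg hgC (hind ((hm₁ _ hE).inter (hm₂ _ hF)))).symm
    _ = ∫ ω, g ω * (μ⟦E | m⟧) ω * (μ⟦F | m⟧) ω ∂μ := by
        refine integral_congr_ae ?_
        filter_upwards [(condIndep_iff m m₁ m₂ hm hm₁ hm₂ μ).mp hCI E F hE hF] with ω hω
        rw [hω, Pi.mul_apply, mul_assoc]
    _ = ∫ ω, g ω * (μ⟦E | m⟧) ω * F.indicator (fun _ => (1 : ℝ)) ω ∂μ :=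
        integral_mul_condExp_of_bound hm (hg.mul stronglyMeasurable_condExp) hgE (hind (hm₂ _ hF))

end CondExp

section WeightedLaw

variable {Ω α β : Type*} {mΩ : MeasurableSpace Ω} [MeasurableSpace α] [MeasurableSpace β]
  {μ : Measure Ω} [IsFiniteMeasure μ] {X : Ω → α × β} {w : Ω → ℝ}

theorem map_withDensity_eq_map_of_setIntegral_preimage_prod (hX : Measurable X)
    (hw : Integrable w μ) (hw0 : ∀ᵐ ω ∂μ, 0 ≤ w ω)
    (hrect : ∀ ⦃s : Set α⦄ ⦃t : Set β⦄, MeasurableSet s → MeasurableSet t →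
      ∫ ω in X ⁻¹' (s ×ˢ t), w ω ∂μ = μ.real (X ⁻¹' (s ×ˢ t))) :
    (μ.withDensity fun ω => ENNReal.ofReal (w ω)).map X = μ.map X := by
  refine (Measure.ext_prod fun {s t} hs ht => ?_).symm
  have hst := hX (hs.prod ht)
  rw [Measure.map_apply hX (hs.prod ht), Measure.map_apply hX (hs.prod ht),
    withDensity_apply _ hst, ← ofReal_integral_eq_lintegral_ofReal hw.restrict
    (ae_restrict_of_ae hw0), hrect hs ht, ofReal_measureReal]

theorem integral_mul_comp_eq_of_setIntegral_preimage_prod (hX : Measurable X)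
    (hw : Integrable w μ) (hw0 : ∀ᵐ ω ∂μ, 0 ≤ w ω)
    (hrect : ∀ ⦃s : Set α⦄ ⦃t : Set β⦄, MeasurableSet s → MeasurableSet t →
      ∫ ω in X ⁻¹' (s ×ˢ t), w ω ∂μ = μ.real (X ⁻¹' (s ×ˢ t)))
    {φ : α × β → ℝ} (hφ : AEStronglyMeasurable φ (μ.map X)) :
    ∫ ω, w ω * φ (X ω) ∂μ = ∫ ω, φ (X ω) ∂μ := by
  have hlaw := map_withDensity_eq_map_of_setIntegral_preimage_prod hX hw hw0 hrect
  calc ∫ ω, w ω * φ (X ω) ∂μ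
      = ∫ ω, φ (X ω) ∂μ.withDensity fun ω => ENNReal.ofReal (w ω) := by
        rw [integral_withDensity_eq_integral_toReal_smul₀ hw.aemeasurable.ennreal_ofReal
          (ae_of_all _ fun _ => ENNReal.ofReal_lt_top)]
        refine integral_congr_ae ?_
        filter_upwards [hw0] with ω hω
        rw [ENNReal.toReal_ofReal hω, smul_eq_mul]
    _ = ∫ x, φ x ∂(μ.withDensity fun ω => ENNReal.ofReal (w ω)).map X :=
        (integral_map hX.aemeasurable (hlaw ▸ hφ)).symm
    _ = ∫ ω, φ (X ω) ∂μ := by rw [hlaw, integral_map hX.aemeasurable hφ]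

end WeightedLaw

section IPSW

variable {Ω α β : Type*} {mΩ : MeasurableSpace Ω} [StandardBorelSpace Ω] [MeasurableSpace α]
  [MeasurableSpace β] {μ : Measure Ω} [IsFiniteMeasure μ]
  {S : Ω → ℝ} {A : Ω → α} {Z : Ω → β} {κ : β → ℝ} {c : ℝ}

theorem setIntegral_div_eq_measureReal_preimage_prod (hS : Measurable S)
    (hSval : ∀ ω, S ω = 0 ∨ S ω = 1) (hA : Measurable A) (hZ : Measurable Z) (hκ : Measurable κ)
    (hc : 0 < c) (hκlb : ∀ z, c ≤ κ z)
    (hκver : (fun ω => κ (Z ω)) =ᵐ[μ] μ[S | MeasurableSpace.comap Z inferInstance])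
    (hCI : CondIndep (MeasurableSpace.comap Z inferInstance)
      (MeasurableSpace.comap S inferInstance) (MeasurableSpace.comap A inferInstance)
      hZ.comap_le μ)
    {s : Set α} {t : Set β} (hs : MeasurableSet s) (ht : MeasurableSet t) :
    ∫ ω in (fun ω => (A ω, Z ω)) ⁻¹' (s ×ˢ t), S ω / κ (Z ω) ∂μ
      = μ.real ((fun ω => (A ω, Z ω)) ⁻¹' (s ×ˢ t)) := by
  have hκpos : ∀ z, 0 < κ z := fun z => hc.trans_le (hκlb z)
  set g : Ω → ℝ := (Z ⁻¹' t).indicator fun ω => (κ (Z ω))⁻¹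
  have hg : StronglyMeasurable[MeasurableSpace.comap Z inferInstance] g :=
    ((hκ.comp (comap_measurable Z)).inv.indicator ⟨t, ht, rfl⟩).stronglyMeasurable
  have hgc : ∀ ω, ‖g ω‖ ≤ c⁻¹ := fun ω => by
    refine (norm_indicator_le_norm_self _ ω).trans ?_
    rw [norm_inv, Real.norm_of_nonneg (hκpos _).le]
    exact inv_anti₀ hc (hκlb _)
  have hS_eq : S = (S ⁻¹' {1}).indicator fun _ => (1 : ℝ) := by
    funext ω; rcases hSval ω with h | h <;> simp [h]
  have hκ_eq : μ⟦S ⁻¹' {1} | MeasurableSpace.comap Z inferInstance⟧ =ᵐ[μ] fun ω => κ (Z ω) :=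
    hS_eq ▸ hκver.symm
  have hst : MeasurableSet ((fun ω => (A ω, Z ω)) ⁻¹' (s ×ˢ t)) := (hA.prodMk hZ) (hs.prod ht)
  calc ∫ ω in (fun ω => (A ω, Z ω)) ⁻¹' (s ×ˢ t), S ω / κ (Z ω) ∂μ
      = ∫ ω, g ω * (S ⁻¹' {1} ∩ A ⁻¹' s).indicator (fun _ => (1 : ℝ)) ω ∂μ := by
        rw [← integral_indicator hst]
        congr 1 with ω
        by_cases hAω : A ω ∈ s <;> by_cases hZω : Z ω ∈ t <;> rcases hSval ω with h | h <;>
          simp [g, h, hAω, hZω, div_eq_inv_mul]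
    _ = ∫ ω, g ω * (μ⟦S ⁻¹' {1} | MeasurableSpace.comap Z inferInstance⟧) ω
          * (A ⁻¹' s).indicator (fun _ => (1 : ℝ)) ω ∂μ :=
        hCI.integral_mul_indicator_inter hZ.comap_le hS.comap_le hA.comap_le hg
          (ae_of_all _ hgc) ⟨{1}, measurableSet_singleton 1, rfl⟩ ⟨s, hs, rfl⟩
    _ = ∫ ω, ((fun ω => (A ω, Z ω)) ⁻¹' (s ×ˢ t)).indicator 1 ω ∂μ := by
        refine integral_congr_ae ?_
        filter_upwards [hκ_eq] with ω hω
        by_cases hAω : A ω ∈ s <;> by_cases hZω : Z ω ∈ t <;>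
          simp [g, hω, hAω, hZω, (hκpos (Z ω)).ne']
    _ = μ.real ((fun ω => (A ω, Z ω)) ⁻¹' (s ×ˢ t)) := integral_indicator_one hst

end IPSW

theorem ipsw_identity_general
    {Ω : Type*} [MeasurableSpace Ω] [StandardBorelSpace Ω]
    (μ : Measure Ω) [IsProbabilityMeasure μ]
    {d : ℕ} (S A : Ω → ℝ) (Z : Ω → (Fin d → ℝ)) (κ : (Fin d → ℝ) → ℝ) (c : ℝ)
    (hS : Measurable S) (hSval : ∀ ω, S ω = 0 ∨ S ω = 1)
    (hA : Measurable A) (hZ : Measurable Z) (hκ : Measurable κ)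
    (hc : 0 < c) (hκlb : ∀ z, c ≤ κ z)
    (hκver : (fun ω => κ (Z ω)) =ᵐ[μ] μ[S | MeasurableSpace.comap Z inferInstance])
    (hCI : CondIndep (MeasurableSpace.comap Z inferInstance)
      (MeasurableSpace.comap S inferInstance)
      (MeasurableSpace.comap A inferInstance)
      hZ.comap_le μ) :
    ∀ (h : ℝ × (Fin d → ℝ) → ℝ), Measurable h → (∃ M, ∀ x, |h x| ≤ M) →
      ∫ ω, (S ω / κ (Z ω)) * h (A ω, Z ω) ∂μ = ∫ ω, h (A ω, Z ω) ∂μ := by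
  intro h hh _
  have hκpos : ∀ z, 0 < κ z := fun z => hc.trans_le (hκlb z)
  have hw0 : ∀ ω, 0 ≤ S ω / κ (Z ω) := fun ω => by
    rcases hSval ω with hω | hω <;> simp [hω, (hκpos (Z ω)).le]
  have hw_le : ∀ ω, ‖S ω / κ (Z ω)‖ ≤ c⁻¹ := fun ω => by
    rw [Real.norm_of_nonneg (hw0 ω), div_eq_mul_inv]
    rcases hSval ω with hω | hω <;> simp [hω, hc.le, inv_anti₀ hc (hκlb (Z ω))]
  have hw : Integrable (fun ω => S ω / κ (Z ω)) μ :=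
    .of_bound (hS.div (hκ.comp hZ)).aestronglyMeasurable _ (ae_of_all _ hw_le)
  exact integral_mul_comp_eq_of_setIntegral_preimage_prod (hA.prodMk hZ) hw (ae_of_all _ hw0)
    (fun _ _ hs ht => setIntegral_div_eq_measureReal_preimage_prod hS hSval hA hZ hκ hc hκlb
      hκver hCI hs ht) hh.aestronglyMeasurable

/-- IPSW identity: if κ ∘ Z is a version of E[S | σ(Z)], c ≤ κ ≤ 1 with c > 0, and S is
conditionally independent of A given σ(Z), then for every bounded measurable h,
E[(S/κ(Z))·h(A, Z)] = E[h(A, Z)]. -/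
theorem ipsw_identity
    {Ω : Type*} [MeasurableSpace Ω] [StandardBorelSpace Ω]
    (μ : Measure Ω) [IsProbabilityMeasure μ]
    {d : ℕ} (S A : Ω → ℝ) (Z : Ω → (Fin d → ℝ)) (κ : (Fin d → ℝ) → ℝ) (c : ℝ)
    (hS : Measurable S) (hSval : ∀ ω, S ω = 0 ∨ S ω = 1)
    (hA : Measurable A) (hZ : Measurable Z) (hκ : Measurable κ)
    (hc : 0 < c) (hκlb : ∀ z, c ≤ κ z) (hκub : ∀ z, κ z ≤ 1)
    (hκver : (fun ω => κ (Z ω)) =ᵐ[μ] μ[S | MeasurableSpace.comap Z inferInstance])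
    (hCI : CondIndep (MeasurableSpace.comap Z inferInstance)
      (MeasurableSpace.comap S inferInstance)
      (MeasurableSpace.comap A inferInstance)
      hZ.comap_le μ) :
    ∀ (h : ℝ × (Fin d → ℝ) → ℝ), Measurable h → (∃ M, ∀ x, |h x| ≤ M) →
      ∫ ω, (S ω / κ (Z ω)) * h (A ω, Z ω) ∂μ = ∫ ω, h (A ω, Z ω) ∂μ :=
  ipsw_identity_general μ S A Z κ c hS hSval hA hZ hκ hc hκlb hκver hCI
end

section
/- Let (Ω, 𝓕, μ) be a standard Borel probability space. Let A : Ω → ℝ take values in {0,1}, let Y₁, Y₀ be bounded real-valued random variables, set Y = A·Y₁ + (1 − A)·Y₀ (consistency), let X : Ω → ℝ^d be measurable, and suppose Y₁ is conditionally independent of A given σ(X) (unconfoundedness). Let g : ℝ^d → ℝ be measurable with c ≤ g(x) ≤ 1 − c for all x, for some 0 < c < 1/2, such that g ∘ X is a version of E[A | σ(X)] (positivity). Then E[A·Y / g(X)] = E[Y₁]. (Inverse-probability-weighting identification of the counterfactual mean.) -/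
open MeasureTheory ProbabilityTheory

/-!
Since `A ∈ {0, 1}`, `A * Y = A * Y₁`, and `A` is the indicator of `S = {A = 1} ∈ σ(A)`.
Conditional independence of `σ(Y₁)` and `σ(A)` given `σ(X)` yields
`E[f * h * 1_S] = E[f * h * P(S | X)]` for bounded `σ(Y₁)`-measurable `f` and bounded
`σ(X)`-measurable `h`: for `f = 1_t` this is the factorisation `P(t ∩ S | X) = P(t | X) P(S | X)`,
and the general case follows by conditioning on `σ(Y₁)`. Taking `f = Y₁`, `h = 1 / g(X)` and
`P(S | X) = g(X)`, the weight cancels.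
-/

lemma Set.mul_indicator_one_eq_indicator {α M : Type*} [MulZeroOneClass M] (f : α → M)
    (s : Set α) : (f * s.indicator fun _ => 1) = s.indicator f := by
  ext a
  by_cases ha : a ∈ s <;> simp [ha]

lemma integral_mul_condExp {Ω : Type*} {m m₀ : MeasurableSpace Ω} {μ : Measure Ω}
    (hm : m ≤ m₀) [SigmaFinite (μ.trim hm)] {f g : Ω → ℝ}
    (hf : StronglyMeasurable[m] f) (hfg : Integrable (f * g) μ) (hg : Integrable g μ) :
    ∫ ω, (f * μ[g | m]) ω ∂μ = ∫ ω, (f * g) ω ∂μ :=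
  (integral_congr_ae (condExp_mul_of_stronglyMeasurable_left hf hfg hg).symm).trans
    (integral_condExp hm)

namespace ProbabilityTheory.CondIndep

variable {Ω : Type*} {m m₁ m₂ m₀ : MeasurableSpace Ω} [StandardBorelSpace Ω]
  {μ : Measure Ω} [IsFiniteMeasure μ] {hm : m ≤ m₀}
  {h : Ω → ℝ} {C : ℝ} {S : Set Ω}

lemma setIntegral_mul_indicator (hCI : CondIndep m m₁ m₂ hm μ) (hm₁ : m₁ ≤ m₀) (hm₂ : m₂ ≤ m₀)
    (hh : StronglyMeasurable[m] h) (hh_bdd : ∀ ω, ‖h ω‖ ≤ C) (hS : MeasurableSet[m₂] S)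
    {t : Set Ω} (ht : MeasurableSet[m₁] t) :
    ∫ ω in t, (h * S.indicator fun _ => (1 : ℝ)) ω ∂μ = ∫ ω in t, (h * μ⟦S | m⟧) ω ∂μ := by
  have ht₀ : MeasurableSet t := hm₁ t ht
  have htS₀ : MeasurableSet (t ∩ S) := ht₀.inter (hm₂ S hS)
  have hh₀ : AEStronglyMeasurable h μ := (hh.mono hm).aestronglyMeasurable
  have hbdd : ∀ᵐ ω ∂μ, ‖h ω‖ ≤ C := ae_of_all _ hh_bdd
  have hhS : Integrable (h * μ⟦S | m⟧) μ := integrable_condExp.bdd_mul hh₀ hbdd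
  calc ∫ ω in t, (h * S.indicator fun _ => (1 : ℝ)) ω ∂μ
      = ∫ ω, (h * (t ∩ S).indicator fun _ => (1 : ℝ)) ω ∂μ := by
        rw [← integral_indicator ht₀, Set.mul_indicator_one_eq_indicator,
          Set.mul_indicator_one_eq_indicator, Set.indicator_indicator]
    _ = ∫ ω, (h * μ⟦t ∩ S | m⟧) ω ∂μ :=
        (integral_mul_condExp hm hh (((integrable_const 1).indicator htS₀).bdd_mul hh₀ hbdd)
          ((integrable_const 1).indicator htS₀)).symm
    _ = ∫ ω, ((h * μ⟦S | m⟧) * μ⟦t | m⟧) ω ∂μ := by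
        refine integral_congr_ae ?_
        filter_upwards [(condIndep_iff m m₁ m₂ hm hm₁ hm₂ μ).mp hCI t S ht hS] with ω hω
        simp only [Pi.mul_apply, hω]
        ring
    _ = ∫ ω, ((h * μ⟦S | m⟧) * t.indicator fun _ => (1 : ℝ)) ω ∂μ := by
        refine integral_mul_condExp hm (hh.mul stronglyMeasurable_condExp) ?_
          ((integrable_const 1).indicator ht₀)
        rw [Set.mul_indicator_one_eq_indicator]
        exact hhS.indicator ht₀
    _ = ∫ ω in t, (h * μ⟦S | m⟧) ω ∂μ := by
        rw [Set.mul_indicator_one_eq_indicator, integral_indicator ht₀]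

lemma integral_mul_mul_indicator (hCI : CondIndep m m₁ m₂ hm μ) (hm₁ : m₁ ≤ m₀)
    (hm₂ : m₂ ≤ m₀) (hh : StronglyMeasurable[m] h) (hh_bdd : ∀ ω, ‖h ω‖ ≤ C)
    (hS : MeasurableSet[m₂] S) {f : Ω → ℝ} {D : ℝ} (hf : StronglyMeasurable[m₁] f)
    (hf_bdd : ∀ ω, ‖f ω‖ ≤ D) :
    ∫ ω, (f * (h * S.indicator fun _ => (1 : ℝ))) ω ∂μ = ∫ ω, (f * (h * μ⟦S | m⟧)) ω ∂μ := by
  have hf₀ : AEStronglyMeasurable f μ := (hf.mono hm₁).aestronglyMeasurable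
  have hh₀ : AEStronglyMeasurable h μ := (hh.mono hm).aestronglyMeasurable
  have hhS : Integrable (h * S.indicator fun _ => (1 : ℝ)) μ :=
    ((integrable_const 1).indicator (hm₂ S hS)).bdd_mul hh₀ (ae_of_all _ hh_bdd)
  have hhP : Integrable (h * μ⟦S | m⟧) μ := integrable_condExp.bdd_mul hh₀ (ae_of_all _ hh_bdd)
  have hcond : μ[h * S.indicator fun _ => (1 : ℝ) | m₁] =ᵐ[μ] μ[h * μ⟦S | m⟧ | m₁] :=
    ae_eq_of_forall_setIntegral_eq_of_sigmaFinite' hm₁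
      (fun _ _ _ => integrable_condExp.integrableOn) (fun _ _ _ => integrable_condExp.integrableOn)
      (fun t ht _ => by
        rw [setIntegral_condExp hm₁ hhS ht, setIntegral_condExp hm₁ hhP ht]
        exact hCI.setIntegral_mul_indicator hm₁ hm₂ hh hh_bdd hS ht)
      stronglyMeasurable_condExp.aestronglyMeasurable
      stronglyMeasurable_condExp.aestronglyMeasurable
  calc ∫ ω, (f * (h * S.indicator fun _ => (1 : ℝ))) ω ∂μ
      = ∫ ω, (f * μ[h * S.indicator fun _ => (1 : ℝ) | m₁]) ω ∂μ :=
        (integral_mul_condExp hm₁ hf (hhS.bdd_mul hf₀ (ae_of_all _ hf_bdd)) hhS).symm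
    _ = ∫ ω, (f * μ[h * μ⟦S | m⟧ | m₁]) ω ∂μ :=
        integral_congr_ae (Filter.EventuallyEq.rfl.mul hcond)
    _ = ∫ ω, (f * (h * μ⟦S | m⟧)) ω ∂μ :=
        integral_mul_condExp hm₁ hf (hhP.bdd_mul hf₀ (ae_of_all _ hf_bdd)) hhP

end ProbabilityTheory.CondIndep

theorem ipw_identification_general
    {Ω : Type*} [MeasurableSpace Ω] [StandardBorelSpace Ω]
    (μ : Measure Ω) [IsProbabilityMeasure μ]
    {d : ℕ} (A Y Y₁ Y₀ : Ω → ℝ) (X : Ω → (Fin d → ℝ)) (g : (Fin d → ℝ) → ℝ) (c : ℝ)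
    (hA : Measurable A) (hAval : ∀ ω, A ω = 0 ∨ A ω = 1)
    (hY₁ : Measurable Y₁)
    (hY₁b : ∃ M, ∀ ω, |Y₁ ω| ≤ M)
    (hYdef : ∀ ω, Y ω = A ω * Y₁ ω + (1 - A ω) * Y₀ ω)
    (hX : Measurable X) (hg : Measurable g)
    (hCI : CondIndep (MeasurableSpace.comap X inferInstance)
      (MeasurableSpace.comap Y₁ inferInstance)
      (MeasurableSpace.comap A inferInstance)
      hX.comap_le μ)
    (hc : 0 < c) (hglb : ∀ x, c ≤ g x)
    (hgver : (fun ω => g (X ω)) =ᵐ[μ] μ[A | MeasurableSpace.comap X inferInstance]) :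
    ∫ ω, A ω * Y ω / g (X ω) ∂μ = ∫ ω, Y₁ ω ∂μ := by
  obtain ⟨M, hM⟩ := hY₁b
  have hg_pos : ∀ ω, 0 < g (X ω) := fun ω => hc.trans_le (hglb _)
  have hA_indicator : A = (A ⁻¹' {1}).indicator fun _ => 1 := by
    ext ω
    rcases hAval ω with h | h <;> simp [h]
  have key := hCI.integral_mul_mul_indicator (h := fun ω => (g (X ω))⁻¹) (C := c⁻¹)
    hY₁.comap_le hA.comap_le ((hg.comp (comap_measurable X)).inv.stronglyMeasurable)
    (fun ω => by
      rw [norm_inv, Real.norm_of_nonneg (hg_pos ω).le]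
      exact inv_anti₀ hc (hglb _))
    ⟨{1}, measurableSet_singleton 1, rfl⟩ (comap_measurable Y₁).stronglyMeasurable
    (fun ω => (Real.norm_eq_abs _).trans_le (hM ω))
  rw [← hA_indicator] at key
  calc ∫ ω, A ω * Y ω / g (X ω) ∂μ = ∫ ω, Y₁ ω * ((g (X ω))⁻¹ * A ω) ∂μ := by
        refine integral_congr_ae (ae_of_all _ fun ω => ?_)
        rcases hAval ω with h | h <;> simp [hYdef, h, div_eq_mul_inv, mul_comm]
    _ = ∫ ω, Y₁ ω * ((g (X ω))⁻¹ * μ[A | MeasurableSpace.comap X inferInstance] ω) ∂μ := key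
    _ = ∫ ω, Y₁ ω ∂μ := by
        refine integral_congr_ae ?_
        filter_upwards [hgver] with ω hω
        rw [← hω, inv_mul_cancel₀ (hg_pos ω).ne', mul_one]

/-- Inverse-probability-weighting identification of the counterfactual mean:
under consistency, unconfoundedness and positivity, E[A·Y / g(X)] = E[Y₁]. -/
theorem ipw_identification
    {Ω : Type*} [MeasurableSpace Ω] [StandardBorelSpace Ω]
    (μ : Measure Ω) [IsProbabilityMeasure μ]
    {d : ℕ} (A Y Y₁ Y₀ : Ω → ℝ) (X : Ω → (Fin d → ℝ)) (g : (Fin d → ℝ) → ℝ) (c : ℝ)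
    (hA : Measurable A) (hAval : ∀ ω, A ω = 0 ∨ A ω = 1)
    (hY₁ : Measurable Y₁) (hY₀ : Measurable Y₀)
    (hY₁b : ∃ M, ∀ ω, |Y₁ ω| ≤ M) (hY₀b : ∃ M, ∀ ω, |Y₀ ω| ≤ M)
    (hYdef : ∀ ω, Y ω = A ω * Y₁ ω + (1 - A ω) * Y₀ ω)
    (hX : Measurable X) (hg : Measurable g)
    (hCI : CondIndep (MeasurableSpace.comap X inferInstance)
      (MeasurableSpace.comap Y₁ inferInstance)
      (MeasurableSpace.comap A inferInstance)
      hX.comap_le μ)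
    (hc : 0 < c) (hc2 : c < 1/2) (hglb : ∀ x, c ≤ g x) (hgub : ∀ x, g x ≤ 1 - c)
    (hgver : (fun ω => g (X ω)) =ᵐ[μ] μ[A | MeasurableSpace.comap X inferInstance]) :
    ∫ ω, A ω * Y ω / g (X ω) ∂μ = ∫ ω, Y₁ ω ∂μ :=
  ipw_identification_general μ A Y Y₁ Y₀ X g c hA hAval hY₁ hY₁b hYdef hX hg hCI hc hglb hgver
end

section
/- Let (Ω, 𝓕, μ) be a standard Borel probability space. Let A : Ω → ℝ take values in {0,1}, let Y₁, Y₀ be bounded real-valued random variables, set Y = A·Y₁ + (1 − A)·Y₀, let X : Ω → ℝ^d be measurable, and suppose Y₁ is conditionally independent of A given σ(X). Let g : ℝ^d → ℝ be measurable with c ≤ g(x) ≤ 1 − c for all x, for some 0 < c < 1/2, such that g ∘ X is a version of E[A | σ(X)], and let m₁ : ℝ^d → ℝ be a bounded measurable function such that (m₁ ∘ X)·(g ∘ X) is a version of E[A·Y | σ(X)]. Then E[m₁(X)] = E[Y₁]. (G-computation identification of the counterfactual mean, the population version of the functional in Equation (2).) -/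
/-!
Since `A ∈ {0, 1}`, `A·Y = A·Y₁`. Conditional independence of `Y₁` and `A` given `X` factorises
`E[A·Y₁ | X] = E[A | X]·E[Y₁ | X] = g(X)·E[Y₁ | X]`, so `m₁(X)·g(X) = g(X)·E[Y₁ | X]` a.s., and
since `g ≥ c > 0` this gives `m₁(X) = E[Y₁ | X]` a.s.; take expectations.

The factorisation `E[1_S·Y | m'] = P(S | m')·E[Y | m']` holds by definition when `Y` is the
indicator of an `m₁`-event. For general `Y`, on each `m'`-event `G` the densities `1_S` and
`P(S | m')` of `μ|_G` then have the same integrals over `m₁`-events, hence the same conditional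
expectation given `m₁`, so they integrate every `m₁`-measurable `Y` alike.
-/

open MeasureTheory ProbabilityTheory

section

variable {Ω : Type*} {mΩ : MeasurableSpace Ω} {μ : Measure Ω} {m : MeasurableSpace Ω}

lemma setIntegral_mul_condExp [IsFiniteMeasure μ] (hm : m ≤ mΩ) {f g : Ω → ℝ} {C : ℝ}
    (hf : StronglyMeasurable[m] f) (hfC : ∀ᵐ ω ∂μ, ‖f ω‖ ≤ C) (hg : Integrable g μ)
    {s : Set Ω} (hs : MeasurableSet[m] s) :
    ∫ ω in s, f ω * μ[g | m] ω ∂μ = ∫ ω in s, f ω * g ω ∂μ := by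
  rw [← setIntegral_condExp hm (hg.bdd_mul (hf.mono hm).aestronglyMeasurable hfC) hs]
  exact setIntegral_congr_ae (hm s hs)
    ((condExp_stronglyMeasurable_mul_of_bound hm hf hg C hfC).mono fun ω hω _ => hω.symm)

lemma ae_norm_condExp_indicator_le_one {S : Set Ω} : ∀ᵐ ω ∂μ, ‖(μ⟦S | m⟧) ω‖ ≤ 1 :=
  ae_bdd_norm_condExp_of_ae_bdd_norm
    (ae_of_all _ fun ω => (norm_indicator_le_norm_self _ ω).trans_eq norm_one)

lemma integral_mul_eq_of_forall_setIntegral_eq [IsFiniteMeasure μ] (hm : m ≤ mΩ)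
    {f₁ f₂ h : Ω → ℝ} (hf₁ : Integrable f₁ μ) (hf₂ : Integrable f₂ μ)
    (hf : ∀ s, MeasurableSet[m] s → ∫ ω in s, f₁ ω ∂μ = ∫ ω in s, f₂ ω ∂μ)
    (hh : StronglyMeasurable[m] h) (hhf₁ : Integrable (h * f₁) μ)
    (hhf₂ : Integrable (h * f₂) μ) :
    ∫ ω, h ω * f₁ ω ∂μ = ∫ ω, h ω * f₂ ω ∂μ := by
  have hcond : μ[f₂ | m] =ᵐ[μ] μ[f₁ | m] :=
    ae_eq_condExp_of_forall_setIntegral_eq hm hf₁ (fun _ _ _ => integrable_condExp.integrableOn)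
      (fun s hs _ => by rw [setIntegral_condExp hm hf₂ hs, hf s hs])
      stronglyMeasurable_condExp.aestronglyMeasurable
  calc ∫ ω, h ω * f₁ ω ∂μ = ∫ ω, μ[h * f₁ | m] ω ∂μ := (integral_condExp hm).symm
    _ = ∫ ω, (h * μ[f₁ | m]) ω ∂μ :=
        integral_congr_ae (condExp_mul_of_stronglyMeasurable_left hh hhf₁ hf₁)
    _ = ∫ ω, (h * μ[f₂ | m]) ω ∂μ := integral_congr_ae hcond.symm.mul_left
    _ = ∫ ω, μ[h * f₂ | m] ω ∂μ :=
        (integral_congr_ae (condExp_mul_of_stronglyMeasurable_left hh hhf₂ hf₂)).symm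
    _ = ∫ ω, h ω * f₂ ω ∂μ := integral_condExp hm

end

namespace ProbabilityTheory.CondIndep

variable {Ω : Type*} {mΩ : MeasurableSpace Ω} [StandardBorelSpace Ω] {μ : Measure Ω}
  [IsFiniteMeasure μ] {m' m₁ m₂ : MeasurableSpace Ω} {hm' : m' ≤ mΩ}

lemma setIntegral_restrict_indicator_eq_condExp (hm₁ : m₁ ≤ mΩ) (hm₂ : m₂ ≤ mΩ)
    (hind : CondIndep m' m₁ m₂ hm' μ) {S G T : Set Ω} (hS : MeasurableSet[m₂] S)
    (hG : MeasurableSet[m'] G) (hT : MeasurableSet[m₁] T) :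
    ∫ ω in T, S.indicator (fun _ => (1 : ℝ)) ω ∂μ.restrict G
      = ∫ ω in T, (μ⟦S | m'⟧) ω ∂μ.restrict G := by
  have hTS := (condIndep_iff m' m₁ m₂ hm' hm₁ hm₂ μ).mp hind T S hT hS
  have hTmeas : MeasurableSet[mΩ] T := hm₁ T hT
  calc ∫ ω in T, S.indicator (fun _ => (1 : ℝ)) ω ∂μ.restrict G
      = ∫ ω in G, (T ∩ S).indicator (fun _ => (1 : ℝ)) ω ∂μ := by
        rw [← integral_indicator hTmeas, Set.indicator_indicator]
    _ = ∫ ω in G, (μ⟦T ∩ S | m'⟧) ω ∂μ :=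
        (setIntegral_condExp hm'
          ((integrable_const 1).indicator (hTmeas.inter (hm₂ S hS))) hG).symm
    _ = ∫ ω in G, (μ⟦S | m'⟧) ω * (μ⟦T | m'⟧) ω ∂μ :=
        setIntegral_congr_ae (hm' G hG)
          (hTS.mono fun ω hω _ => by rw [hω, Pi.mul_apply, mul_comm])
    _ = ∫ ω in G, (μ⟦S | m'⟧) ω * T.indicator (fun _ => (1 : ℝ)) ω ∂μ :=
        setIntegral_mul_condExp hm' stronglyMeasurable_condExp ae_norm_condExp_indicator_le_one
          ((integrable_const 1).indicator hTmeas) hG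
    _ = ∫ ω in T, (μ⟦S | m'⟧) ω ∂μ.restrict G := by
        rw [← integral_indicator hTmeas]
        congr 1 with ω
        by_cases hω : ω ∈ T <;> simp [hω]

lemma condExp_indicator_ae_eq_mul (hm₁ : m₁ ≤ mΩ) (hm₂ : m₂ ≤ mΩ)
    (hind : CondIndep m' m₁ m₂ hm' μ) {S : Set Ω} (hS : MeasurableSet[m₂] S) {Y : Ω → ℝ}
    (hYm : StronglyMeasurable[m₁] Y) (hY : Integrable Y μ) :
    μ[S.indicator Y | m'] =ᵐ[μ] μ⟦S | m'⟧ * μ[Y | m'] := by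
  set p := μ⟦S | m'⟧
  have hSmeas : MeasurableSet[mΩ] S := hm₂ S hS
  have hp_le : ∀ᵐ ω ∂μ, ‖p ω‖ ≤ 1 := ae_norm_condExp_indicator_le_one
  have hpm : StronglyMeasurable[m'] p := stronglyMeasurable_condExp
  have hYS : (Y * S.indicator fun _ => (1 : ℝ)) = S.indicator Y := by
    ext ω
    by_cases hω : ω ∈ S <;> simp [hω]
  refine (ae_eq_condExp_of_forall_setIntegral_eq hm' (hY.indicator hSmeas)
    (fun _ _ _ =>
      (integrable_condExp.bdd_mul (hpm.mono hm').aestronglyMeasurable hp_le).integrableOn)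
    (fun G hG _ => ?_) (hpm.mul stronglyMeasurable_condExp).aestronglyMeasurable).symm
  calc ∫ ω in G, (p * μ[Y | m']) ω ∂μ = ∫ ω in G, Y ω * p ω ∂μ := by
        simp only [Pi.mul_apply, mul_comm (Y _)]
        exact setIntegral_mul_condExp hm' hpm hp_le hY hG
    _ = ∫ ω in G, Y ω * S.indicator (fun _ => (1 : ℝ)) ω ∂μ :=
        (integral_mul_eq_of_forall_setIntegral_eq hm₁
          ((integrable_const 1).indicator hSmeas).restrict integrable_condExp.restrict
          (fun T hT => hind.setIntegral_restrict_indicator_eq_condExp hm₁ hm₂ hS hG hT) hYm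
          (hYS ▸ (hY.indicator hSmeas).restrict)
          (hY.mul_bdd (hpm.mono hm').aestronglyMeasurable hp_le).restrict).symm
    _ = ∫ ω in G, S.indicator Y ω ∂μ := by rw [← hYS]; rfl

end ProbabilityTheory.CondIndep

theorem gcomputation_identification_general
    {Ω : Type*} [MeasurableSpace Ω] [StandardBorelSpace Ω]
    (μ : Measure Ω) [IsProbabilityMeasure μ]
    {d : ℕ} (A Y Y₁ Y₀ : Ω → ℝ) (X : Ω → (Fin d → ℝ))
    (g m₁ : (Fin d → ℝ) → ℝ) (c : ℝ)
    (hA : Measurable A) (hAval : ∀ ω, A ω = 0 ∨ A ω = 1)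
    (hY₁ : Measurable Y₁)
    (hY₁b : ∃ M, ∀ ω, |Y₁ ω| ≤ M)
    (hYdef : ∀ ω, Y ω = A ω * Y₁ ω + (1 - A ω) * Y₀ ω)
    (hX : Measurable X)
    (hCI : CondIndep (MeasurableSpace.comap X inferInstance)
      (MeasurableSpace.comap Y₁ inferInstance)
      (MeasurableSpace.comap A inferInstance)
      hX.comap_le μ)
    (hc : 0 < c) (hglb : ∀ x, c ≤ g x)
    (hgver : (fun ω => g (X ω)) =ᵐ[μ] μ[A | MeasurableSpace.comap X inferInstance])
    (hm₁ver : (fun ω => m₁ (X ω) * g (X ω))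
      =ᵐ[μ] μ[fun ω => A ω * Y ω | MeasurableSpace.comap X inferInstance]) :
    ∫ ω, m₁ (X ω) ∂μ = ∫ ω, Y₁ ω ∂μ := by
  obtain ⟨M, hM⟩ := hY₁b
  have hY₁int : Integrable Y₁ μ :=
    .of_bound hY₁.aestronglyMeasurable M
      (ae_of_all _ fun ω => (Real.norm_eq_abs _).trans_le (hM ω))
  set S := A ⁻¹' {1}
  have hSA : (S.indicator fun _ => (1 : ℝ)) = A := by
    ext ω
    rcases hAval ω with h | h <;> simp [S, h]
  have hAY : (fun ω => A ω * Y ω) = S.indicator Y₁ := by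
    ext ω
    rcases hAval ω with h | h <;> simp [S, h, hYdef]
  have hprod := hCI.condExp_indicator_ae_eq_mul hY₁.comap_le hA.comap_le
    ⟨{1}, measurableSet_singleton 1, rfl⟩ (comap_measurable Y₁).stronglyMeasurable hY₁int
  rw [hSA, ← hAY] at hprod
  have hm₁X : (fun ω => m₁ (X ω)) =ᵐ[μ] μ[Y₁ | MeasurableSpace.comap X inferInstance] := by
    filter_upwards [hm₁ver, hprod, hgver] with ω h₁ h₂ h₃
    refine mul_right_cancel₀ (hc.trans_le (hglb (X ω))).ne' ?_
    rw [h₁, h₂, Pi.mul_apply, ← h₃, mul_comm]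
  rw [integral_congr_ae hm₁X, integral_condExp hX.comap_le]

/-- G-computation identification of the counterfactual mean: if (m₁ ∘ X)·(g ∘ X) is a
version of E[A·Y | σ(X)], then E[m₁(X)] = E[Y₁]. -/
theorem gcomputation_identification
    {Ω : Type*} [MeasurableSpace Ω] [StandardBorelSpace Ω]
    (μ : Measure Ω) [IsProbabilityMeasure μ]
    {d : ℕ} (A Y Y₁ Y₀ : Ω → ℝ) (X : Ω → (Fin d → ℝ))
    (g m₁ : (Fin d → ℝ) → ℝ) (c : ℝ)
    (hA : Measurable A) (hAval : ∀ ω, A ω = 0 ∨ A ω = 1)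
    (hY₁ : Measurable Y₁) (hY₀ : Measurable Y₀)
    (hY₁b : ∃ M, ∀ ω, |Y₁ ω| ≤ M) (hY₀b : ∃ M, ∀ ω, |Y₀ ω| ≤ M)
    (hYdef : ∀ ω, Y ω = A ω * Y₁ ω + (1 - A ω) * Y₀ ω)
    (hX : Measurable X) (hg : Measurable g)
    (hCI : CondIndep (MeasurableSpace.comap X inferInstance)
      (MeasurableSpace.comap Y₁ inferInstance)
      (MeasurableSpace.comap A inferInstance)
      hX.comap_le μ)
    (hc : 0 < c) (hc2 : c < 1/2) (hglb : ∀ x, c ≤ g x) (hgub : ∀ x, g x ≤ 1 - c)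
    (hgver : (fun ω => g (X ω)) =ᵐ[μ] μ[A | MeasurableSpace.comap X inferInstance])
    (hm₁ : Measurable m₁) (hm₁b : ∃ M, ∀ x, |m₁ x| ≤ M)
    (hm₁ver : (fun ω => m₁ (X ω) * g (X ω))
      =ᵐ[μ] μ[fun ω => A ω * Y ω | MeasurableSpace.comap X inferInstance]) :
    ∫ ω, m₁ (X ω) ∂μ = ∫ ω, Y₁ ω ∂μ :=
  gcomputation_identification_general μ A Y Y₁ Y₀ X g m₁ c hA hAval hY₁ hY₁b hYdef hX hCI hc hglb
    hgver hm₁ver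
end

section
/- Let (Ω, 𝓕, μ) be a standard Borel probability space. Let A : Ω → ℝ take values in {0,1}, let Y₁, Y₀ be bounded real-valued random variables, set Y = A·Y₁ + (1 − A)·Y₀, let X : Ω → ℝ^d be measurable, and suppose Y₁ is conditionally independent of A given σ(X). Let g : ℝ^d → ℝ be measurable with c ≤ g(x) ≤ 1 − c for all x, for some 0 < c < 1/2, such that g ∘ X is a version of E[A | σ(X)]. Then for every bounded measurable function m̂ : ℝ^d → ℝ (a possibly misspecified outcome model), E[(A/g(X))·(Y − m̂(X)) + m̂(X)] = E[Y₁]. (Double robustness of the AIPW functional when the propensity score is correct.) -/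
/-!
Write `w = A / g(X)` and `t = {A = 1}`. Since `A·Y = A·Y₁`, the AIPW integrand equals
`w·(Y₁ - m̂(X)) + m̂(X)`, so it suffices that reweighting by `w` leaves both `E[Y₁]` and
`E[m̂(X)]` unchanged. For `m̂(X)` this is the pull-out property: `E[A | X] = g(X)` cancels the
denominator. For `Y₁`, conditional independence gives, for `s ∈ σ(Y₁)`,
`E[1_{s ∩ t} | X] = E[1_s | X]·g(X)`, hence `∫_s w = μ s`; so `E[w | σ(Y₁)] = 1`, and pulling
the `σ(Y₁)`-measurable `Y₁` out of the conditional expectation gives `E[Y₁·w] = E[Y₁]`.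
-/

open MeasureTheory ProbabilityTheory

section

variable {Ω : Type*} {m m₀ : MeasurableSpace Ω} {μ : Measure Ω}

lemma norm_div_le_div_of_le {a b C c : ℝ} (hc : 0 < c) (ha : ‖a‖ ≤ C) (hb : c ≤ b) :
    ‖a / b‖ ≤ C / c := by
  rw [norm_div, Real.norm_of_nonneg (hc.le.trans hb)]
  exact div_le_div₀ ((norm_nonneg a).trans ha) ha hc hb

theorem integrable_div_of_norm_le_of_le [IsFiniteMeasure μ] {f p : Ω → ℝ}
    (hf : AEMeasurable f μ) {C : ℝ} (hfC : ∀ ω, ‖f ω‖ ≤ C)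
    (hp : AEMeasurable p μ) {c : ℝ} (hc : 0 < c) (hpc : ∀ ω, c ≤ p ω) :
    Integrable (fun ω ↦ f ω / p ω) μ :=
  .of_bound (hf.div hp).aestronglyMeasurable (C / c)
    (.of_forall fun ω ↦ norm_div_le_div_of_le hc (hfC ω) (hpc ω))

theorem integral_mul_condExp_s7 [IsFiniteMeasure μ] (hm : m ≤ m₀) {φ f : Ω → ℝ}
    (hφ : StronglyMeasurable[m] φ) {C : ℝ} (hφC : ∀ᵐ ω ∂μ, ‖φ ω‖ ≤ C) (hf : Integrable f μ) :
    ∫ ω, φ ω * (μ[f | m]) ω ∂μ = ∫ ω, φ ω * f ω ∂μ :=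
  (integral_congr_ae (condExp_stronglyMeasurable_mul_of_bound hm hφ hf C hφC)).symm.trans
    (integral_condExp hm)

theorem integral_mul_eq_integral_of_setIntegral_eq_measureReal [IsFiniteMeasure μ]
    (hm : m ≤ m₀) {w f : Ω → ℝ} (hw : Integrable w μ)
    (hws : ∀ s, MeasurableSet[m] s → ∫ ω in s, w ω ∂μ = μ.real s)
    (hf : StronglyMeasurable[m] f) {C : ℝ} (hfC : ∀ᵐ ω ∂μ, ‖f ω‖ ≤ C) :
    ∫ ω, f ω * w ω ∂μ = ∫ ω, f ω ∂μ := by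
  have hw_one : (fun _ ↦ (1 : ℝ)) =ᵐ[μ] μ[w | m] :=
    ae_eq_condExp_of_forall_setIntegral_eq hm hw (fun _ _ _ ↦ integrableOn_const)
      (fun s hs _ ↦ by simp [hws s hs]) aestronglyMeasurable_const
  calc ∫ ω, f ω * w ω ∂μ = ∫ ω, f ω * (μ[w | m]) ω ∂μ := (integral_mul_condExp_s7 hm hf hfC hw).symm
    _ = ∫ ω, f ω ∂μ := integral_congr_ae <| hw_one.mono fun ω h ↦ by simp [← h]

theorem integral_mul_div_eq_of_ae_eq_condExp [IsFiniteMeasure μ] (hm : m ≤ m₀) {φ f p : Ω → ℝ}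
    (hφ : StronglyMeasurable[m] φ) {C : ℝ} (hφC : ∀ ω, ‖φ ω‖ ≤ C) (hf : Integrable f μ)
    (hp : StronglyMeasurable[m] p) {c : ℝ} (hc : 0 < c) (hpc : ∀ ω, c ≤ p ω)
    (hpf : p =ᵐ[μ] μ[f | m]) :
    ∫ ω, φ ω * (f ω / p ω) ∂μ = ∫ ω, φ ω ∂μ := calc
  ∫ ω, φ ω * (f ω / p ω) ∂μ = ∫ ω, φ ω / p ω * f ω ∂μ := by
      congr 1 with ω; ring
  _ = ∫ ω, φ ω / p ω * (μ[f | m]) ω ∂μ :=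
      (integral_mul_condExp_s7 hm (hφ.div hp) (.of_forall fun ω ↦
        norm_div_le_div_of_le hc (hφC ω) (hpc ω)) hf).symm
  _ = ∫ ω, φ ω ∂μ := integral_congr_ae <| hpf.mono fun ω h ↦ by
      simp [← h, div_mul_cancel₀ _ (hc.trans_le (hpc ω)).ne']

theorem setIntegral_inter_inv_eq_measureReal [StandardBorelSpace Ω] [IsFiniteMeasure μ]
    {m' m₁ m₂ : MeasurableSpace Ω} (hm' : m' ≤ m₀) (hm₁ : m₁ ≤ m₀) (hm₂ : m₂ ≤ m₀)
    (hCI : CondIndep m' m₁ m₂ hm' μ) {s t : Set Ω} (hs : MeasurableSet[m₁] s)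
    (ht : MeasurableSet[m₂] t) {p : Ω → ℝ} (hp : StronglyMeasurable[m'] p) {c : ℝ} (hc : 0 < c)
    (hpc : ∀ ω, c ≤ p ω) (hpt : p =ᵐ[μ] μ⟦t | m'⟧) :
    ∫ ω in s ∩ t, (p ω)⁻¹ ∂μ = μ.real s := by
  have hst := (condIndep_iff m' m₁ m₂ hm' hm₁ hm₂ μ).1 hCI s t hs ht
  calc ∫ ω in s ∩ t, (p ω)⁻¹ ∂μ = ∫ ω, (p ω)⁻¹ * (s ∩ t).indicator 1 ω ∂μ := by
        rw [← integral_indicator ((hm₁ s hs).inter (hm₂ t ht))]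
        congr 1 with ω
        by_cases h : ω ∈ s ∩ t <;> simp [h]
    _ = ∫ ω, (p ω)⁻¹ * (μ⟦s ∩ t | m'⟧) ω ∂μ := by
        refine (integral_mul_condExp_s7 hm' hp.measurable.inv.stronglyMeasurable (C := c⁻¹)
          (.of_forall fun ω ↦ ?_) ?_).symm
        · simpa using norm_div_le_div_of_le hc (norm_one (α := ℝ)).le (hpc ω)
        · exact (integrable_const 1).indicator ((hm₁ s hs).inter (hm₂ t ht))
    _ = ∫ ω, (μ⟦s | m'⟧) ω ∂μ := integral_congr_ae <| (hst.and hpt).mono fun ω ⟨h, h'⟩ ↦ by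
        have hpω : p ω ≠ 0 := (hc.trans_le (hpc ω)).ne'
        simp only [h, Pi.mul_apply, ← h']
        field_simp
    _ = μ.real s := (integral_condExp hm').trans (integral_indicator_one (hm₁ s hs))

theorem integral_mul_indicator_div_eq_of_condIndep [StandardBorelSpace Ω] [IsFiniteMeasure μ]
    {m' m₁ m₂ : MeasurableSpace Ω} (hm' : m' ≤ m₀) (hm₁ : m₁ ≤ m₀) (hm₂ : m₂ ≤ m₀)
    (hCI : CondIndep m' m₁ m₂ hm' μ) {t : Set Ω} (ht : MeasurableSet[m₂] t) {p : Ω → ℝ}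
    (hp : StronglyMeasurable[m'] p) {c : ℝ} (hc : 0 < c) (hpc : ∀ ω, c ≤ p ω)
    (hpt : p =ᵐ[μ] μ⟦t | m'⟧) {f : Ω → ℝ} (hf : StronglyMeasurable[m₁] f) {C : ℝ}
    (hfC : ∀ ω, ‖f ω‖ ≤ C) :
    ∫ ω, f ω * (t.indicator 1 ω / p ω) ∂μ = ∫ ω, f ω ∂μ := by
  have hw : Integrable (fun ω ↦ t.indicator 1 ω / p ω) μ :=
    integrable_div_of_norm_le_of_le ((@measurable_one ℝ Ω _ m₀ _).indicator (hm₂ t ht)).aemeasurable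
      (C := 1) (fun ω ↦ norm_indicator_le_norm_self 1 ω |>.trans norm_one.le)
      (hp.measurable.mono hm' le_rfl).aemeasurable hc hpc
  refine integral_mul_eq_integral_of_setIntegral_eq_measureReal hm₁ hw (fun s hs ↦ ?_) hf
    (.of_forall hfC)
  rw [← setIntegral_inter_inv_eq_measureReal hm' hm₁ hm₂ hCI hs ht hp hc hpc hpt,
    ← integral_indicator (hm₁ s hs), ← integral_indicator ((hm₁ s hs).inter (hm₂ t ht))]
  congr 1 with ω
  by_cases hs : ω ∈ s <;> by_cases ht : ω ∈ t <;> simp [hs, ht, div_eq_mul_inv]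

theorem integral_mul_sub_add_eq [IsFiniteMeasure μ] {w f h : Ω → ℝ} (hw : Integrable w μ)
    (hf : AEStronglyMeasurable f μ) {C : ℝ} (hfC : ∀ ω, ‖f ω‖ ≤ C)
    (hh : AEStronglyMeasurable h μ) {D : ℝ} (hhD : ∀ ω, ‖h ω‖ ≤ D)
    (hfw : ∫ ω, f ω * w ω ∂μ = ∫ ω, f ω ∂μ) (hhw : ∫ ω, h ω * w ω ∂μ = ∫ ω, h ω ∂μ) :
    ∫ ω, w ω * (f ω - h ω) + h ω ∂μ = ∫ ω, f ω ∂μ := by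
  have hfw_int := hw.bdd_mul hf (.of_forall hfC)
  have hhw_int := hw.bdd_mul hh (.of_forall hhD)
  calc ∫ ω, w ω * (f ω - h ω) + h ω ∂μ = ∫ ω, (f ω * w ω - h ω * w ω) + h ω ∂μ := by
        congr 1 with ω; ring
    _ = ∫ ω, f ω ∂μ := by
        rw [integral_add (f := fun ω ↦ _ - _) (hfw_int.sub hhw_int)
          (.of_bound hh D (.of_forall hhD)), integral_sub hfw_int hhw_int, hfw, hhw, sub_add_cancel]

end

theorem aipw_double_robust_propensity_general
    {Ω : Type*} [MeasurableSpace Ω] [StandardBorelSpace Ω]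
    (μ : Measure Ω) [IsProbabilityMeasure μ]
    {d : ℕ} (A Y Y₁ Y₀ : Ω → ℝ) (X : Ω → (Fin d → ℝ)) (g : (Fin d → ℝ) → ℝ) (c : ℝ)
    (hA : Measurable A) (hAval : ∀ ω, A ω = 0 ∨ A ω = 1)
    (hY₁ : Measurable Y₁)
    (hY₁b : ∃ M, ∀ ω, |Y₁ ω| ≤ M)
    (hYdef : ∀ ω, Y ω = A ω * Y₁ ω + (1 - A ω) * Y₀ ω)
    (hX : Measurable X) (hg : Measurable g)
    (hCI : CondIndep (MeasurableSpace.comap X inferInstance)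
      (MeasurableSpace.comap Y₁ inferInstance)
      (MeasurableSpace.comap A inferInstance)
      hX.comap_le μ)
    (hc : 0 < c) (hglb : ∀ x, c ≤ g x)
    (hgver : (fun ω => g (X ω)) =ᵐ[μ] μ[A | MeasurableSpace.comap X inferInstance]) :
    ∀ (mhat : (Fin d → ℝ) → ℝ), Measurable mhat → (∃ M, ∀ x, |mhat x| ≤ M) →
      ∫ ω, (A ω / g (X ω)) * (Y ω - mhat (X ω)) + mhat (X ω) ∂μ = ∫ ω, Y₁ ω ∂μ := by
  rintro mhat hmhat ⟨Mm, hMm⟩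
  obtain ⟨M₁, hM₁⟩ := hY₁b
  have hA₁ : ∀ ω, ‖A ω‖ ≤ 1 := fun ω ↦ by rcases hAval ω with h | h <;> simp [h]
  have hgX : StronglyMeasurable[.comap X inferInstance] fun ω ↦ g (X ω) :=
    (hg.comp (comap_measurable X)).stronglyMeasurable
  have hIPW : ∫ ω, Y₁ ω * (A ω / g (X ω)) ∂μ = ∫ ω, Y₁ ω ∂μ := by
    have hAt : A = (A ⁻¹' {1}).indicator 1 := by
      funext ω; rcases hAval ω with h | h <;> simp [h]
    rw [hAt] at hgver ⊢
    exact integral_mul_indicator_div_eq_of_condIndep hX.comap_le hY₁.comap_le hA.comap_le hCI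
      ⟨{1}, measurableSet_singleton 1, rfl⟩ hgX hc (hglb <| X ·) hgver
      (comap_measurable Y₁).stronglyMeasurable hM₁
  have hOM : ∫ ω, mhat (X ω) * (A ω / g (X ω)) ∂μ = ∫ ω, mhat (X ω) ∂μ :=
    integral_mul_div_eq_of_ae_eq_condExp hX.comap_le
      (hmhat.comp (comap_measurable X)).stronglyMeasurable (hMm <| X ·)
      (.of_bound hA.aestronglyMeasurable 1 (.of_forall hA₁)) hgX hc (hglb <| X ·) hgver
  calc ∫ ω, (A ω / g (X ω)) * (Y ω - mhat (X ω)) + mhat (X ω) ∂μ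
      = ∫ ω, (A ω / g (X ω)) * (Y₁ ω - mhat (X ω)) + mhat (X ω) ∂μ := by
        congr 1 with ω
        rcases hAval ω with h | h <;> simp [hYdef, h]
    _ = ∫ ω, Y₁ ω ∂μ :=
        integral_mul_sub_add_eq
          (integrable_div_of_norm_le_of_le hA.aemeasurable hA₁ (hg.comp hX).aemeasurable hc
            (hglb <| X ·))
          hY₁.aestronglyMeasurable hM₁ (hmhat.comp hX).aestronglyMeasurable (hMm <| X ·) hIPW hOM

/-- Double robustness of the AIPW functional when the propensity score is correct:
for every bounded measurable (possibly misspecified) outcome model mhat,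
E[(A/g(X))·(Y − mhat(X)) + mhat(X)] = E[Y₁]. -/
theorem aipw_double_robust_propensity
    {Ω : Type*} [MeasurableSpace Ω] [StandardBorelSpace Ω]
    (μ : Measure Ω) [IsProbabilityMeasure μ]
    {d : ℕ} (A Y Y₁ Y₀ : Ω → ℝ) (X : Ω → (Fin d → ℝ)) (g : (Fin d → ℝ) → ℝ) (c : ℝ)
    (hA : Measurable A) (hAval : ∀ ω, A ω = 0 ∨ A ω = 1)
    (hY₁ : Measurable Y₁) (hY₀ : Measurable Y₀)
    (hY₁b : ∃ M, ∀ ω, |Y₁ ω| ≤ M) (hY₀b : ∃ M, ∀ ω, |Y₀ ω| ≤ M)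
    (hYdef : ∀ ω, Y ω = A ω * Y₁ ω + (1 - A ω) * Y₀ ω)
    (hX : Measurable X) (hg : Measurable g)
    (hCI : CondIndep (MeasurableSpace.comap X inferInstance)
      (MeasurableSpace.comap Y₁ inferInstance)
      (MeasurableSpace.comap A inferInstance)
      hX.comap_le μ)
    (hc : 0 < c) (hc2 : c < 1/2) (hglb : ∀ x, c ≤ g x) (hgub : ∀ x, g x ≤ 1 - c)
    (hgver : (fun ω => g (X ω)) =ᵐ[μ] μ[A | MeasurableSpace.comap X inferInstance]) :
    ∀ (mhat : (Fin d → ℝ) → ℝ), Measurable mhat → (∃ M, ∀ x, |mhat x| ≤ M) →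
      ∫ ω, (A ω / g (X ω)) * (Y ω - mhat (X ω)) + mhat (X ω) ∂μ = ∫ ω, Y₁ ω ∂μ :=
  aipw_double_robust_propensity_general μ A Y Y₁ Y₀ X g c hA hAval hY₁ hY₁b hYdef hX hg hCI hc hglb
    hgver
end

section
/- Let (Ω, 𝓕, μ) be a standard Borel probability space. Let A : Ω → ℝ take values in {0,1}, let Y₁, Y₀ be bounded real-valued random variables, set Y = A·Y₁ + (1 − A)·Y₀, let X : Ω → ℝ^d be measurable, and suppose Y₁ is conditionally independent of A given σ(X). Let g : ℝ^d → ℝ be measurable with c ≤ g(x) ≤ 1 − c for all x, for some 0 < c < 1/2, such that g ∘ X is a version of E[A | σ(X)], and let m₁ : ℝ^d → ℝ be a bounded measurable function such that (m₁ ∘ X)·(g ∘ X) is a version of E[A·Y | σ(X)] (a correctly specified outcome model). Then for every measurable ĝ : ℝ^d → ℝ with c ≤ ĝ(x) ≤ 1 for all x (a possibly misspecified propensity model), E[(A/ĝ(X))·(Y − m₁(X)) + m₁(X)] = E[Y₁]. (Double robustness of the AIPW functional when the outcome model is correct.) -/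
/-!
Since `A ∈ {0, 1}`, `A Y = A Y₁`. Unconfoundedness gives `E[A | σ(X) ⊔ σ(Y₁)] = E[A | X]`
(a π-λ argument over the sets `G ∩ S`, `G ∈ σ(X)`, `S ∈ σ(Y₁)`), hence
`E[A Y₁ | X] = E[A | X] E[Y₁ | X]`. As `E[A | X] = g(X) ≥ c > 0`, a correct outcome model forces
`m₁(X) = E[Y₁ | X]` a.s. The residual `A (Y₁ - m₁(X))` then has conditional mean zero given `X`,
so it is orthogonal to every bounded `σ(X)`-measurable weight, in particular to `1 / ĝ(X)`, whatever
`ĝ` is; what remains is `E[m₁(X)] = E[E[Y₁ | X]] = E[Y₁]`.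
-/

open MeasureTheory ProbabilityTheory

namespace MeasurableSpace

variable {Ω : Type*}

theorem isPiSystem_image2_inter (m₁ m₂ : MeasurableSpace Ω) :
    IsPiSystem (Set.image2 (· ∩ ·) {s | MeasurableSet[m₁] s} {s | MeasurableSet[m₂] s}) := by
  rintro _ ⟨G, hG, S, hS, rfl⟩ _ ⟨G', hG', S', hS', rfl⟩ _
  exact ⟨G ∩ G', hG.inter hG', S ∩ S', hS.inter hS', (Set.inter_inter_inter_comm G S G' S').symm⟩

theorem sup_eq_generateFrom_image2_inter (m₁ m₂ : MeasurableSpace Ω) :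
    m₁ ⊔ m₂ =
      generateFrom (Set.image2 (· ∩ ·) {s | MeasurableSet[m₁] s} {s | MeasurableSet[m₂] s}) := by
  refine le_antisymm (sup_le (fun s hs ↦ ?_) (fun s hs ↦ ?_)) (generateFrom_le ?_)
  · exact measurableSet_generateFrom ⟨s, hs, Set.univ, .univ, Set.inter_univ s⟩
  · exact measurableSet_generateFrom ⟨Set.univ, .univ, s, hs, Set.univ_inter s⟩
  · rintro _ ⟨G, hG, S, hS, rfl⟩
    exact (le_sup_left (a := m₁) _ hG).inter (le_sup_right (a := m₁) _ hS)

end MeasurableSpace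

theorem setIntegral_eq_setIntegral_of_isPiSystem {α : Type*} {m m₀ : MeasurableSpace α}
    {μ : Measure α} (hm : m ≤ m₀) {C : Set (Set α)} (h_eq : m = MeasurableSpace.generateFrom C)
    (h_inter : IsPiSystem C) {f g : α → ℝ} (hf : Integrable f μ) (hg : Integrable g μ)
    (h_basic : ∀ s ∈ C, ∫ x in s, f x ∂μ = ∫ x in s, g x ∂μ)
    (h_univ : ∫ x, f x ∂μ = ∫ x, g x ∂μ) {s : Set α} (hs : MeasurableSet[m] s) :
    ∫ x in s, f x ∂μ = ∫ x in s, g x ∂μ := by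
  induction s, hs using MeasurableSpace.induction_on_inter h_eq h_inter with
  | empty => simp
  | basic s hs => exact h_basic s hs
  | compl s hs h =>
    have hf' := integral_add_compl (hm s hs) hf
    have hg' := integral_add_compl (hm s hs) hg
    linarith
  | iUnion s hdisj hs h =>
    have hs₀ i : MeasurableSet (s i) := hm _ (hs i)
    refine (hasSum_integral_iUnion hs₀ hdisj hf.integrableOn).unique ?_
    simpa only [h] using hasSum_integral_iUnion hs₀ hdisj hg.integrableOn

theorem integral_mul_eq_zero_of_condExp_ae_eq_zero {α : Type*} {m m₀ : MeasurableSpace α}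
    {μ : Measure α} [IsFiniteMeasure μ] (hm : m ≤ m₀) {ψ f : α → ℝ} (hψ : StronglyMeasurable[m] ψ)
    {C : ℝ} (hψ_bdd : ∀ᵐ x ∂μ, ‖ψ x‖ ≤ C) (hf : Integrable f μ) (hf_zero : μ[f | m] =ᵐ[μ] 0) :
    ∫ x, ψ x * f x ∂μ = 0 :=
  calc ∫ x, ψ x * f x ∂μ = ∫ x, (μ[ψ * f | m]) x ∂μ := (integral_condExp hm).symm
    _ = ∫ x, (ψ * μ[f | m]) x ∂μ :=
        integral_congr_ae (condExp_stronglyMeasurable_mul_of_bound hm hψ hf C hψ_bdd)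
    _ = ∫ x, (ψ * 0) x ∂μ := integral_congr_ae (Filter.EventuallyEq.rfl.mul hf_zero)
    _ = 0 := by simp

namespace ProbabilityTheory

section CondIndep

variable {Ω : Type*} {m' m₁ m₂ mΩ : MeasurableSpace Ω} [StandardBorelSpace Ω] {hm' : m' ≤ mΩ}
  {μ : Measure Ω} [IsFiniteMeasure μ] {t : Set Ω}

theorem CondIndep.setIntegral_condExp_indicator_inter (hCI : CondIndep m' m₁ m₂ hm' μ)
    (hm₁ : m₁ ≤ mΩ) (hm₂ : m₂ ≤ mΩ) (ht : MeasurableSet[m₂] t) {G S : Set Ω}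
    (hG : MeasurableSet[m'] G) (hS : MeasurableSet[m₁] S) :
    ∫ ω in G ∩ S, (μ⟦t | m'⟧) ω ∂μ = ∫ ω in G ∩ S, t.indicator (fun _ ↦ (1 : ℝ)) ω ∂μ := by
  have h_mul := (condIndep_iff m' m₁ m₂ hm' hm₁ hm₂ μ).mp hCI S t hS ht
  have hS₀ : MeasurableSet S := hm₁ S hS
  have hint_S : Integrable (S.indicator fun _ ↦ (1 : ℝ)) μ := (integrable_const 1).indicator hS₀
  have hint_St : Integrable ((S ∩ t).indicator fun _ ↦ (1 : ℝ)) μ :=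
    (integrable_const 1).indicator (hS₀.inter (hm₂ t ht))
  calc ∫ ω in G ∩ S, (μ⟦t | m'⟧) ω ∂μ
      = ∫ ω in G, ((S.indicator fun _ ↦ (1 : ℝ)) * μ⟦t | m'⟧) ω ∂μ := by
        rw [← setIntegral_indicator hS₀]
        congr 1 with ω
        by_cases hω : ω ∈ S <;> simp [hω]
    _ = ∫ ω in G, (μ⟦S | m'⟧ * μ⟦t | m'⟧) ω ∂μ := by
        have hint : Integrable ((S.indicator fun _ ↦ (1 : ℝ)) * μ⟦t | m'⟧) μ :=
          integrable_condExp.bdd_mul (c := 1) hint_S.aestronglyMeasurable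
            (ae_of_all _ fun ω ↦ (norm_indicator_le_norm_self _ ω).trans_eq norm_one)
        rw [← setIntegral_condExp hm' hint hG]
        exact setIntegral_congr_ae (hm' G hG) ((condExp_mul_of_stronglyMeasurable_right
          stronglyMeasurable_condExp hint hint_S).mono fun _ h _ ↦ h)
    _ = ∫ ω in G, (μ⟦S ∩ t | m'⟧) ω ∂μ :=
        setIntegral_congr_ae (hm' G hG) (h_mul.symm.mono fun _ h _ ↦ h)
    _ = ∫ ω in G, (S ∩ t).indicator (fun _ ↦ (1 : ℝ)) ω ∂μ := setIntegral_condExp hm' hint_St hG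
    _ = ∫ ω in G ∩ S, t.indicator (fun _ ↦ (1 : ℝ)) ω ∂μ := by
        rw [← Set.indicator_indicator, setIntegral_indicator hS₀]

theorem CondIndep.condExp_indicator_sup_ae_eq (hCI : CondIndep m' m₁ m₂ hm' μ) (hm₁ : m₁ ≤ mΩ)
    (hm₂ : m₂ ≤ mΩ) (ht : MeasurableSet[m₂] t) :
    μ⟦t | m' ⊔ m₁⟧ =ᵐ[μ] μ⟦t | m'⟧ := by
  have hint_t : Integrable (t.indicator fun _ ↦ (1 : ℝ)) μ :=
    (integrable_const 1).indicator (hm₂ t ht)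
  refine (ae_eq_condExp_of_forall_setIntegral_eq (sup_le hm' hm₁) hint_t
    (fun _ _ _ ↦ integrable_condExp.integrableOn) (fun s hs _ ↦ ?_)
    (stronglyMeasurable_condExp.mono (le_sup_left : m' ≤ m' ⊔ m₁)).aestronglyMeasurable).symm
  refine setIntegral_eq_setIntegral_of_isPiSystem (sup_le hm' hm₁)
    (MeasurableSpace.sup_eq_generateFrom_image2_inter m' m₁)
    (MeasurableSpace.isPiSystem_image2_inter m' m₁) integrable_condExp hint_t ?_
    (integral_condExp hm') hs
  rintro _ ⟨G, hG, S, hS, rfl⟩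
  exact hCI.setIntegral_condExp_indicator_inter hm₁ hm₂ ht hG hS

theorem CondIndep.condExp_indicator_mul_ae_eq (hCI : CondIndep m' m₁ m₂ hm' μ) (hm₁ : m₁ ≤ mΩ)
    (hm₂ : m₂ ≤ mΩ) (ht : MeasurableSet[m₂] t) {f : Ω → ℝ} (hf : StronglyMeasurable[m₁] f)
    (hf_int : Integrable f μ) :
    μ[(t.indicator fun _ ↦ 1) * f | m'] =ᵐ[μ] μ⟦t | m'⟧ * μ[f | m'] := by
  have hm'' : m' ⊔ m₁ ≤ mΩ := sup_le hm' hm₁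
  have hint_t : Integrable (t.indicator fun _ ↦ (1 : ℝ)) μ :=
    (integrable_const 1).indicator (hm₂ t ht)
  have h_ind_bdd : ∀ᵐ ω ∂μ, ‖t.indicator (fun _ ↦ (1 : ℝ)) ω‖ ≤ 1 :=
    ae_of_all _ fun ω ↦ (norm_indicator_le_norm_self _ ω).trans_eq norm_one
  have hint : Integrable ((t.indicator fun _ ↦ (1 : ℝ)) * f) μ :=
    hf_int.bdd_mul hint_t.aestronglyMeasurable h_ind_bdd
  have h_bdd : ∀ᵐ ω ∂μ, ‖(μ⟦t | m'⟧) ω‖ ≤ 1 := ae_bdd_abs_condExp_of_ae_bdd_abs h_ind_bdd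
  calc μ[(t.indicator fun _ ↦ 1) * f | m']
      =ᵐ[μ] μ[μ[(t.indicator fun _ ↦ 1) * f | m' ⊔ m₁] | m'] :=
        (condExp_condExp_of_le le_sup_left hm'').symm
    _ =ᵐ[μ] μ[μ⟦t | m'⟧ * f | m'] := by
        refine condExp_congr_ae ?_
        filter_upwards [condExp_mul_of_stronglyMeasurable_right
          (hf.mono (le_sup_right : m₁ ≤ m' ⊔ m₁)) hint hint_t,
          hCI.condExp_indicator_sup_ae_eq hm₁ hm₂ ht] with ω h₁ h₂
        simp only [h₁, Pi.mul_apply, h₂]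
    _ =ᵐ[μ] μ⟦t | m'⟧ * μ[f | m'] :=
        condExp_stronglyMeasurable_mul_of_bound hm' stronglyMeasurable_condExp hf_int 1 h_bdd

theorem CondIndep.condExp_indicator_mul_sub_condExp_ae_eq_zero (hCI : CondIndep m' m₁ m₂ hm' μ)
    (hm₁ : m₁ ≤ mΩ) (hm₂ : m₂ ≤ mΩ) (ht : MeasurableSet[m₂] t) {f : Ω → ℝ}
    (hf : StronglyMeasurable[m₁] f) (hf_int : Integrable f μ) :
    μ[(t.indicator fun _ ↦ 1) * (f - μ[f | m']) | m'] =ᵐ[μ] 0 := by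
  have hint_t : Integrable (t.indicator fun _ ↦ (1 : ℝ)) μ :=
    (integrable_const 1).indicator (hm₂ t ht)
  have h_bdd : ∀ᵐ ω ∂μ, ‖t.indicator (fun _ ↦ (1 : ℝ)) ω‖ ≤ 1 :=
    ae_of_all _ fun ω ↦ (norm_indicator_le_norm_self _ ω).trans_eq norm_one
  have hint_f : Integrable ((t.indicator fun _ ↦ 1) * f) μ :=
    hf_int.bdd_mul hint_t.aestronglyMeasurable h_bdd
  have hint_cond : Integrable ((t.indicator fun _ ↦ 1) * μ[f | m']) μ :=
    integrable_condExp.bdd_mul hint_t.aestronglyMeasurable h_bdd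
  rw [mul_sub]
  filter_upwards [condExp_sub hint_f hint_cond m',
    hCI.condExp_indicator_mul_ae_eq hm₁ hm₂ ht hf hf_int,
    condExp_mul_of_stronglyMeasurable_right stronglyMeasurable_condExp hint_cond hint_t]
    with ω h_sub h_f h_cond
  simp only [h_sub, Pi.sub_apply, h_f, h_cond, sub_self, Pi.zero_apply]

theorem CondIndep.ae_eq_condExp_of_mul_ae_eq (hCI : CondIndep m' m₁ m₂ hm' μ) (hm₁ : m₁ ≤ mΩ)
    (hm₂ : m₂ ≤ mΩ) (ht : MeasurableSet[m₂] t) {f : Ω → ℝ} (hf : StronglyMeasurable[m₁] f)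
    (hf_int : Integrable f μ) {h p : Ω → ℝ} (hp : p =ᵐ[μ] μ⟦t | m'⟧) (hp_ne : ∀ᵐ ω ∂μ, p ω ≠ 0)
    (hhp : (fun ω ↦ h ω * p ω) =ᵐ[μ] μ[(t.indicator fun _ ↦ 1) * f | m']) :
    h =ᵐ[μ] μ[f | m'] := by
  filter_upwards [hp, hp_ne, hhp, hCI.condExp_indicator_mul_ae_eq hm₁ hm₂ ht hf hf_int]
    with ω hp hp_ne hhp h_mul
  refine mul_right_cancel₀ hp_ne ?_
  rw [hhp, h_mul, Pi.mul_apply, hp, mul_comm]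

theorem CondIndep.integral_mul_indicator_mul_sub_add_eq (hCI : CondIndep m' m₁ m₂ hm' μ)
    (hm₁ : m₁ ≤ mΩ) (hm₂ : m₂ ≤ mΩ) (ht : MeasurableSet[m₂] t) {f : Ω → ℝ}
    (hf : StronglyMeasurable[m₁] f) (hf_int : Integrable f μ) {ψ h : Ω → ℝ}
    (hψ : StronglyMeasurable[m'] ψ) {C : ℝ} (hψ_bdd : ∀ᵐ ω ∂μ, ‖ψ ω‖ ≤ C)
    (hh : h =ᵐ[μ] μ[f | m']) :
    ∫ ω, ψ ω * (t.indicator (fun _ ↦ 1) ω * (f ω - h ω)) + h ω ∂μ = ∫ ω, f ω ∂μ := by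
  have hh_int : Integrable h μ := integrable_condExp.congr hh.symm
  have h_res_int : Integrable ((t.indicator fun _ ↦ 1) * (f - h)) μ :=
    (hf_int.sub hh_int).bdd_mul (c := 1) ((integrable_const 1).indicator (hm₂ t ht)).1
      (ae_of_all _ fun ω ↦ (norm_indicator_le_norm_self _ ω).trans_eq norm_one)
  have h_res : μ[(t.indicator fun _ ↦ 1) * (f - h) | m'] =ᵐ[μ] 0 :=
    (condExp_congr_ae (Filter.EventuallyEq.rfl.mul (Filter.EventuallyEq.rfl.sub hh))).trans
      (hCI.condExp_indicator_mul_sub_condExp_ae_eq_zero hm₁ hm₂ ht hf hf_int)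
  calc ∫ ω, ψ ω * (t.indicator (fun _ ↦ 1) ω * (f ω - h ω)) + h ω ∂μ
      = ∫ ω, ψ ω * ((t.indicator fun _ ↦ (1 : ℝ)) * (f - h)) ω ∂μ + ∫ ω, h ω ∂μ :=
        integral_add (h_res_int.bdd_mul (hψ.mono hm').aestronglyMeasurable hψ_bdd) hh_int
    _ = ∫ ω, (μ[f | m']) ω ∂μ := by
        rw [integral_mul_eq_zero_of_condExp_ae_eq_zero hm' hψ hψ_bdd h_res_int h_res, zero_add,
          integral_congr_ae hh]
    _ = ∫ ω, f ω ∂μ := integral_condExp hm'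

end CondIndep

end ProbabilityTheory

theorem aipw_double_robust_outcome_general
    {Ω : Type*} [MeasurableSpace Ω] [StandardBorelSpace Ω]
    (μ : Measure Ω) [IsProbabilityMeasure μ]
    {d : ℕ} (A Y Y₁ Y₀ : Ω → ℝ) (X : Ω → (Fin d → ℝ))
    (g m₁ : (Fin d → ℝ) → ℝ) (c : ℝ)
    (hA : Measurable A) (hAval : ∀ ω, A ω = 0 ∨ A ω = 1)
    (hY₁ : Measurable Y₁)
    (hY₁b : ∃ M, ∀ ω, |Y₁ ω| ≤ M)
    (hYdef : ∀ ω, Y ω = A ω * Y₁ ω + (1 - A ω) * Y₀ ω)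
    (hX : Measurable X)
    (hCI : CondIndep (MeasurableSpace.comap X inferInstance)
      (MeasurableSpace.comap Y₁ inferInstance)
      (MeasurableSpace.comap A inferInstance)
      hX.comap_le μ)
    (hc : 0 < c) (hglb : ∀ x, c ≤ g x)
    (hgver : (fun ω => g (X ω)) =ᵐ[μ] μ[A | MeasurableSpace.comap X inferInstance])
    (hm₁ver : (fun ω => m₁ (X ω) * g (X ω))
      =ᵐ[μ] μ[fun ω => A ω * Y ω | MeasurableSpace.comap X inferInstance]) :
    ∀ (ghat : (Fin d → ℝ) → ℝ), Measurable ghat → (∀ x, c ≤ ghat x) → (∀ x, ghat x ≤ 1) →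
      ∫ ω, (A ω / ghat (X ω)) * (Y ω - m₁ (X ω)) + m₁ (X ω) ∂μ = ∫ ω, Y₁ ω ∂μ := by
  intro ghat hghat hghat_lb _
  obtain ⟨M, hM⟩ := hY₁b
  have hY₁_int : Integrable Y₁ μ := .of_bound hY₁.aestronglyMeasurable M (ae_of_all _ hM)
  have hY₁_sm : StronglyMeasurable[MeasurableSpace.comap Y₁ inferInstance] Y₁ :=
    (comap_measurable Y₁).stronglyMeasurable
  set t := A ⁻¹' {1}
  have ht : MeasurableSet[MeasurableSpace.comap A inferInstance] t :=
    ⟨{1}, measurableSet_singleton 1, rfl⟩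
  have hA_eq : A = t.indicator fun _ ↦ 1 := by
    funext ω; rcases hAval ω with h | h <;> simp [t, h]
  have hAY : (fun ω ↦ A ω * Y ω) = A * Y₁ := by
    funext ω; rcases hAval ω with h | h <;> simp [hYdef, h]
  have hm₁X : (fun ω ↦ m₁ (X ω)) =ᵐ[μ] μ[Y₁ | MeasurableSpace.comap X inferInstance] := by
    rw [hAY, hA_eq] at hm₁ver
    rw [hA_eq] at hgver
    exact hCI.ae_eq_condExp_of_mul_ae_eq hY₁.comap_le hA.comap_le ht hY₁_sm hY₁_int hgver
      (ae_of_all _ fun ω ↦ (hc.trans_le (hglb _)).ne') hm₁ver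
  have hψ : StronglyMeasurable[MeasurableSpace.comap X inferInstance] fun ω ↦ (ghat (X ω))⁻¹ :=
    (hghat.comp (comap_measurable X)).inv.stronglyMeasurable
  have hψ_bdd : ∀ᵐ ω ∂μ, ‖(ghat (X ω))⁻¹‖ ≤ c⁻¹ := ae_of_all _ fun ω ↦ by
    rw [norm_inv, Real.norm_of_nonneg (hc.le.trans (hghat_lb _))]
    exact inv_anti₀ hc (hghat_lb _)
  calc ∫ ω, A ω / ghat (X ω) * (Y ω - m₁ (X ω)) + m₁ (X ω) ∂μ
      = ∫ ω, (ghat (X ω))⁻¹ * (t.indicator (fun _ ↦ 1) ω * (Y₁ ω - m₁ (X ω))) + m₁ (X ω) ∂μ := by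
        congr 1 with ω
        rcases hAval ω with h | h <;> simp [hYdef, h, t, div_eq_inv_mul]
    _ = ∫ ω, Y₁ ω ∂μ :=
        hCI.integral_mul_indicator_mul_sub_add_eq hY₁.comap_le hA.comap_le ht hY₁_sm hY₁_int hψ
          hψ_bdd hm₁X

/-- Double robustness of the AIPW functional when the outcome model is correct:
for every (possibly misspecified) propensity model ghat with c ≤ ghat ≤ 1,
E[(A/ghat(X))·(Y − m₁(X)) + m₁(X)] = E[Y₁]. -/
theorem aipw_double_robust_outcome
    {Ω : Type*} [MeasurableSpace Ω] [StandardBorelSpace Ω]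
    (μ : Measure Ω) [IsProbabilityMeasure μ]
    {d : ℕ} (A Y Y₁ Y₀ : Ω → ℝ) (X : Ω → (Fin d → ℝ))
    (g m₁ : (Fin d → ℝ) → ℝ) (c : ℝ)
    (hA : Measurable A) (hAval : ∀ ω, A ω = 0 ∨ A ω = 1)
    (hY₁ : Measurable Y₁) (hY₀ : Measurable Y₀)
    (hY₁b : ∃ M, ∀ ω, |Y₁ ω| ≤ M) (hY₀b : ∃ M, ∀ ω, |Y₀ ω| ≤ M)
    (hYdef : ∀ ω, Y ω = A ω * Y₁ ω + (1 - A ω) * Y₀ ω)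
    (hX : Measurable X) (hg : Measurable g)
    (hCI : CondIndep (MeasurableSpace.comap X inferInstance)
      (MeasurableSpace.comap Y₁ inferInstance)
      (MeasurableSpace.comap A inferInstance)
      hX.comap_le μ)
    (hc : 0 < c) (hc2 : c < 1/2) (hglb : ∀ x, c ≤ g x) (hgub : ∀ x, g x ≤ 1 - c)
    (hgver : (fun ω => g (X ω)) =ᵐ[μ] μ[A | MeasurableSpace.comap X inferInstance])
    (hm₁ : Measurable m₁) (hm₁b : ∃ M, ∀ x, |m₁ x| ≤ M)
    (hm₁ver : (fun ω => m₁ (X ω) * g (X ω))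
      =ᵐ[μ] μ[fun ω => A ω * Y ω | MeasurableSpace.comap X inferInstance]) :
    ∀ (ghat : (Fin d → ℝ) → ℝ), Measurable ghat → (∀ x, c ≤ ghat x) → (∀ x, ghat x ≤ 1) →
      ∫ ω, (A ω / ghat (X ω)) * (Y ω - m₁ (X ω)) + m₁ (X ω) ∂μ = ∫ ω, Y₁ ω ∂μ :=
  aipw_double_robust_outcome_general μ A Y Y₁ Y₀ X g m₁ c hA hAval hY₁ hY₁b hYdef hX hCI hc hglb
    hgver hm₁ver
end

section
/- Let (Ω, 𝓕, μ) be a standard Borel probability space. Let A, S : Ω → ℝ take values in {0,1}, let Y₁, Y₀ be bounded real-valued random variables, set Y = A·Y₁ + (1 − A)·Y₀, let X : Ω → ℝ^d be measurable. Suppose Y₁ is conditionally independent of A given σ(X), and the pair (Y, A) is conditionally independent of S given σ(X) (covariate-dependent validation). Let g, κ : ℝ^d → ℝ be measurable with c ≤ g(x) ≤ 1 − c and c ≤ κ(x) ≤ 1 for all x, for some 0 < c < 1/2, such that g ∘ X is a version of E[A | σ(X)] and κ ∘ X is a version of E[S | σ(X)]. Then E[A·S·Y / (κ(X)·g(X))]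 = E[Y₁]. (Population version of the weighted generalization identification of the target counterfactual mean, Equation (gen-functional).) -/
/-!
Conditioning on `X`: unconfoundedness factors `E[A·Y₁ | X] = E[Y₁ | X]·g(X)`, and
covariate-dependent validation factors `E[A·Y·S | X] = E[A·Y | X]·κ(X)`. Since `A·Y = A·Y₁`, the conditional expectation
of `A·S·Y` given `X` is `E[Y₁ | X]·g(X)·κ(X)`, so the `σ(X)`-measurable weight `1 / (κ(X)·g(X))`
cancels it down to `E[Y₁ | X]`, whose mean is `E[Y₁]`.
-/

open MeasureTheory ProbabilityTheory

namespace ProbabilityTheory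

variable {Ω : Type*} {m' mΩ : MeasurableSpace Ω} [StandardBorelSpace Ω] {hm' : m' ≤ mΩ}
  {μ : Measure Ω} [IsFiniteMeasure μ]

/-- Countable generation of `β × β'` lets the null sets be chosen uniformly in the sets. -/
theorem CondIndepFun.ae_indepFun_condExpKernel {β β' : Type*} {mβ : MeasurableSpace β}
    {mβ' : MeasurableSpace β'} [MeasurableSpace.CountablyGenerated (β × β')]
    {f : Ω → β} {g : Ω → β'} (hfg : CondIndepFun m' hm' f g μ)
    (hf : Measurable f) (hg : Measurable g) :
    ∀ᵐ ω ∂μ, IndepFun f g (condExpKernel μ m' ω) := by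
  have h := ae_of_ae_trim hm' ((condIndepFun_iff_map_prod_eq_prod_map_map hf hg).1 hfg)
  filter_upwards [h] with ω hω
  rw [indepFun_iff_map_prod_eq_prod_map_map hf.aemeasurable hg.aemeasurable]
  simpa [Kernel.map_apply _ hf, Kernel.map_apply _ hg, Kernel.map_apply _ (hf.prodMk hg),
    Kernel.prod_apply] using hω

theorem CondIndepFun.condExp_mul_ae_eq {f g : Ω → ℝ} (hfg : CondIndepFun m' hm' f g μ)
    (hf : Measurable f) (hg : Measurable g) (hf_int : Integrable f μ) (hg_int : Integrable g μ)
    (hfg_int : Integrable (f * g) μ) :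
    μ[f * g | m'] =ᵐ[μ] μ[f | m'] * μ[g | m'] := by
  filter_upwards [hfg.ae_indepFun_condExpKernel hf hg,
    condExp_ae_eq_integral_condExpKernel hm' hfg_int,
    condExp_ae_eq_integral_condExpKernel hm' hf_int,
    condExp_ae_eq_integral_condExpKernel hm' hg_int] with ω hind hfg' hf' hg'
  rw [hfg', Pi.mul_apply, hf', hg']
  exact IndepFun.integral_mul_eq_mul_integral hind hf.aestronglyMeasurable hg.aestronglyMeasurable

end ProbabilityTheory

namespace MeasureTheory

variable {Ω : Type*} {m mΩ : MeasurableSpace Ω} {μ : Measure Ω}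

theorem integral_mul_eq_integral_mul_condExp (hm : m ≤ mΩ) [SigmaFinite (μ.trim hm)]
    {h f : Ω → ℝ} (hh : StronglyMeasurable[m] h) (hhf : Integrable (h * f) μ)
    (hf : Integrable f μ) :
    ∫ ω, h ω * f ω ∂μ = ∫ ω, h ω * μ[f | m] ω ∂μ := by
  rw [← integral_condExp hm]
  exact integral_congr_ae (condExp_mul_of_stronglyMeasurable_left hh hhf hf)

theorem integral_div_eq_of_condExp_ae_eq_mul [IsFiniteMeasure μ] (hm : m ≤ mΩ) {F Y e : Ω → ℝ}
    {c : ℝ} (hc : 0 < c) (he : StronglyMeasurable[m] e) (hce : ∀ ω, c ≤ e ω)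
    (hF : Integrable F μ) (hFY : μ[F | m] =ᵐ[μ] μ[Y | m] * e) :
    ∫ ω, F ω / e ω ∂μ = ∫ ω, Y ω ∂μ := by
  have he_pos ω : 0 < e ω := hc.trans_le (hce ω)
  have he_inv_bound : ∀ᵐ ω ∂μ, ‖(e ω)⁻¹‖ ≤ c⁻¹ := ae_of_all _ fun ω => by
    rw [Real.norm_eq_abs, abs_of_pos (inv_pos.2 (he_pos ω))]
    exact inv_anti₀ hc (hce ω)
  have he_inv : StronglyMeasurable[m] e⁻¹ := he.measurable.inv.stronglyMeasurable
  calc ∫ ω, F ω / e ω ∂μ = ∫ ω, (e ω)⁻¹ * F ω ∂μ := by simp only [div_eq_inv_mul]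
    _ = ∫ ω, (e ω)⁻¹ * μ[F | m] ω ∂μ :=
        integral_mul_eq_integral_mul_condExp hm he_inv
          (hF.bdd_mul (he_inv.mono hm).aestronglyMeasurable he_inv_bound) hF
    _ = ∫ ω, μ[Y | m] ω ∂μ := by
        refine integral_congr_ae (hFY.mono fun ω hω => ?_)
        dsimp only
        rw [hω, Pi.mul_apply, inv_mul_eq_div, mul_div_cancel_right₀ _ (he_pos ω).ne']
    _ = ∫ ω, Y ω ∂μ := integral_condExp hm

end MeasureTheory

theorem weighted_generalization_identification_general
    {Ω : Type*} [MeasurableSpace Ω] [StandardBorelSpace Ω]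
    (μ : Measure Ω) [IsProbabilityMeasure μ]
    {d : ℕ} (A S Y Y₁ Y₀ : Ω → ℝ) (X : Ω → (Fin d → ℝ))
    (g κ : (Fin d → ℝ) → ℝ) (c : ℝ)
    (hA : Measurable A) (hAval : ∀ ω, A ω = 0 ∨ A ω = 1)
    (hS : Measurable S) (hSval : ∀ ω, S ω = 0 ∨ S ω = 1)
    (hY₁ : Measurable Y₁)
    (hY₁b : ∃ M, ∀ ω, |Y₁ ω| ≤ M)
    (hYdef : ∀ ω, Y ω = A ω * Y₁ ω + (1 - A ω) * Y₀ ω)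
    (hX : Measurable X) (hg : Measurable g) (hκ : Measurable κ)
    (hCI : CondIndep (MeasurableSpace.comap X inferInstance)
      (MeasurableSpace.comap Y₁ inferInstance)
      (MeasurableSpace.comap A inferInstance)
      hX.comap_le μ)
    (hCIS : CondIndep (MeasurableSpace.comap X inferInstance)
      (MeasurableSpace.comap (fun ω => (Y ω, A ω)) inferInstance)
      (MeasurableSpace.comap S inferInstance)
      hX.comap_le μ)
    (hc : 0 < c)
    (hglb : ∀ x, c ≤ g x)
    (hκlb : ∀ x, c ≤ κ x)
    (hgver : (fun ω => g (X ω)) =ᵐ[μ] μ[A | MeasurableSpace.comap X inferInstance])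
    (hκver : (fun ω => κ (X ω)) =ᵐ[μ] μ[S | MeasurableSpace.comap X inferInstance]) :
    ∫ ω, A ω * S ω * Y ω / (κ (X ω) * g (X ω)) ∂μ = ∫ ω, Y₁ ω ∂μ := by
  obtain ⟨M, hM⟩ := hY₁b
  have hAY : A * Y = Y₁ * A := funext fun ω => by
    rcases hAval ω with h | h <;> simp [hYdef ω, h]
  have norm_le_one {Z : Ω → ℝ} (hZ : ∀ ω, Z ω = 0 ∨ Z ω = 1) : ∀ᵐ ω ∂μ, ‖Z ω‖ ≤ 1 :=
    ae_of_all _ fun ω => by rcases hZ ω with h | h <;> simp [h]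
  have hY₁_int : Integrable Y₁ μ := .of_bound hY₁.aestronglyMeasurable M (ae_of_all _ hM)
  have hA_int : Integrable A μ := .of_bound hA.aestronglyMeasurable 1 (norm_le_one hAval)
  have hS_int : Integrable S μ := .of_bound hS.aestronglyMeasurable 1 (norm_le_one hSval)
  have hY₁A_int : Integrable (Y₁ * A) μ :=
    hY₁_int.mul_bdd hA.aestronglyMeasurable (norm_le_one hAval)
  have hY₁AS_int : Integrable (Y₁ * A * S) μ :=
    hY₁A_int.mul_bdd hS.aestronglyMeasurable (norm_le_one hSval)
  have hCIA : CondIndepFun _ hX.comap_le Y₁ A μ := hCI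
  have hCIS_Y₁A : CondIndepFun _ hX.comap_le (Y₁ * A) S μ := by
    rw [← hAY]
    exact (show CondIndepFun _ hX.comap_le (fun ω => (Y ω, A ω)) S μ from hCIS).comp
      (measurable_snd.mul measurable_fst) measurable_id
  have hcond : μ[Y₁ * A * S | MeasurableSpace.comap X inferInstance] =ᵐ[μ]
      μ[Y₁ | MeasurableSpace.comap X inferInstance] * fun ω => κ (X ω) * g (X ω) := by
    filter_upwards [hCIS_Y₁A.condExp_mul_ae_eq (hY₁.mul hA) hS hY₁A_int hS_int hY₁AS_int,
      hCIA.condExp_mul_ae_eq hY₁ hA hY₁_int hA_int hY₁A_int, hgver, hκver] with ω h1 h2 h3 h4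
    simp only [Pi.mul_apply] at h1 h2 ⊢
    rw [h1, h2, ← h3, ← h4]
    ring
  have hκg : StronglyMeasurable[MeasurableSpace.comap X inferInstance]
      fun ω => κ (X ω) * g (X ω) := ((hκ.mul hg).comp (comap_measurable X)).stronglyMeasurable
  calc ∫ ω, A ω * S ω * Y ω / (κ (X ω) * g (X ω)) ∂μ
      = ∫ ω, (Y₁ * A * S) ω / (κ (X ω) * g (X ω)) ∂μ := by
        simp_rw [← hAY, Pi.mul_apply, mul_right_comm (A _) (S _)]
    _ = ∫ ω, Y₁ ω ∂μ := integral_div_eq_of_condExp_ae_eq_mul hX.comap_le (mul_pos hc hc) hκg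
        (fun ω => mul_le_mul (hκlb _) (hglb _) hc.le (hc.le.trans (hκlb _))) hY₁AS_int hcond

/-- Weighted generalization identification of the target counterfactual mean:
under unconfoundedness, covariate-dependent validation and positivity,
E[A·S·Y / (κ(X)·g(X))] = E[Y₁]. -/
theorem weighted_generalization_identification
    {Ω : Type*} [MeasurableSpace Ω] [StandardBorelSpace Ω]
    (μ : Measure Ω) [IsProbabilityMeasure μ]
    {d : ℕ} (A S Y Y₁ Y₀ : Ω → ℝ) (X : Ω → (Fin d → ℝ))
    (g κ : (Fin d → ℝ) → ℝ) (c : ℝ)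
    (hA : Measurable A) (hAval : ∀ ω, A ω = 0 ∨ A ω = 1)
    (hS : Measurable S) (hSval : ∀ ω, S ω = 0 ∨ S ω = 1)
    (hY₁ : Measurable Y₁) (hY₀ : Measurable Y₀)
    (hY₁b : ∃ M, ∀ ω, |Y₁ ω| ≤ M) (hY₀b : ∃ M, ∀ ω, |Y₀ ω| ≤ M)
    (hYdef : ∀ ω, Y ω = A ω * Y₁ ω + (1 - A ω) * Y₀ ω)
    (hX : Measurable X) (hg : Measurable g) (hκ : Measurable κ)
    (hCI : CondIndep (MeasurableSpace.comap X inferInstance)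
      (MeasurableSpace.comap Y₁ inferInstance)
      (MeasurableSpace.comap A inferInstance)
      hX.comap_le μ)
    (hCIS : CondIndep (MeasurableSpace.comap X inferInstance)
      (MeasurableSpace.comap (fun ω => (Y ω, A ω)) inferInstance)
      (MeasurableSpace.comap S inferInstance)
      hX.comap_le μ)
    (hc : 0 < c) (hc2 : c < 1/2)
    (hglb : ∀ x, c ≤ g x) (hgub : ∀ x, g x ≤ 1 - c)
    (hκlb : ∀ x, c ≤ κ x) (hκub : ∀ x, κ x ≤ 1)
    (hgver : (fun ω => g (X ω)) =ᵐ[μ] μ[A | MeasurableSpace.comap X inferInstance])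
    (hκver : (fun ω => κ (X ω)) =ᵐ[μ] μ[S | MeasurableSpace.comap X inferInstance]) :
    ∫ ω, A ω * S ω * Y ω / (κ (X ω) * g (X ω)) ∂μ = ∫ ω, Y₁ ω ∂μ :=
  weighted_generalization_identification_general μ A S Y Y₁ Y₀ X g κ c hA hAval hS hSval hY₁ hY₁b
    hYdef hX hg hκ hCI hCIS hc hglb hκlb hgver hκver
end

section
/- Let (Ω, 𝓕, μ) be a standard Borel probability space. Let A, S : Ω → ℝ take values in {0,1}, let Y₁, Y₀ be bounded real-valued random variables, set Y = A·Y₁ + (1 − A)·Y₀, let X : Ω → ℝ^d be measurable. Suppose Y₁ is conditionally independent of A given σ(X), and the pair (Y, A) is conditionally independent of S given σ(X). Suppose there exists a constant c > 0 such that E[A·S | σ(X)] ≥ c almost everywhere, and let μ₁ : ℝ^d → ℝ be a bounded measurable function such that (μ₁ ∘ X)·E[A·S | σ(X)] is a version of E[A·S·Y | σ(X)]. Then E[μ₁(X)] = E[Y₁]. (Regression form of the generalization identification: the conditional mean of Y given X among treated, validated subjects, averaged over the full covariate distribution, recovers the target counterfactual mean.) -/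
open MeasureTheory ProbabilityTheory

/-!
Conditional independence of `m₁` and `m₂` given `m` makes `μ[· | m]` multiplicative on bounded
functions `U` of `m₁` and `V` of `m₂`. For indicators this is the definition; it passes to bounded
`V` because, on every `m`-event, `F - μ[F | m]` is orthogonal to all indicators of `m₂` and hence
(conditioning on `m₂`) to all bounded `m₂`-measurable functions; then symmetrically to bounded `U`.

Applied to the pairs `(A * Y, S)`, `(A, S)`, `(Y₁, A)`, and using `A * Y = A * Y₁`, this gives
`E[A S Y | X] = E[Y₁ | X] * E[A S | X]`. Since `E[A S | X] ≥ c > 0`, `μ₁ ∘ X = E[Y₁ | X]` a.e.,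
and the tower property finishes.
-/

section

variable {Ω : Type*} {m m₁ m₂ mΩ : MeasurableSpace Ω} {μ : Measure Ω}

theorem integral_mul_eq_zero_of_forall_setIntegral_eq_zero [IsFiniteMeasure μ] (hm : m ≤ mΩ)
    {G V : Ω → ℝ} (hG : Integrable G μ) (hGm : ∀ t, MeasurableSet[m] t → ∫ ω in t, G ω ∂μ = 0)
    (hV : StronglyMeasurable[m] V) {C : ℝ} (hVC : ∀ᵐ ω ∂μ, ‖V ω‖ ≤ C) :
    ∫ ω, V ω * G ω ∂μ = 0 := by
  have hG0 : μ[G|m] =ᵐ[μ] 0 :=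
    (ae_eq_condExp_of_forall_setIntegral_eq hm hG (fun _ _ _ => integrableOn_zero)
      (fun t ht _ => by simp [hGm t ht]) aestronglyMeasurable_zero).symm
  calc ∫ ω, V ω * G ω ∂μ = ∫ ω, (μ[V * G|m]) ω ∂μ := (integral_condExp hm).symm
    _ = ∫ ω, (V * μ[G|m]) ω ∂μ :=
      integral_congr_ae (condExp_stronglyMeasurable_mul_of_bound hm hV hG C hVC)
    _ = 0 := integral_eq_zero_of_ae (by filter_upwards [hG0] with ω h; simp [h])

theorem setIntegral_mul_condExp_of_stronglyMeasurable_left [IsFiniteMeasure μ] (hm : m ≤ mΩ)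
    {g W : Ω → ℝ} (hg : StronglyMeasurable[m] g) (hgW : Integrable (g * W) μ)
    (hW : Integrable W μ) {s : Set Ω} (hs : MeasurableSet[m] s) :
    ∫ ω in s, (g * μ[W|m]) ω ∂μ = ∫ ω in s, (g * W) ω ∂μ := by
  rw [← setIntegral_condExp hm hgW hs]
  exact setIntegral_congr_ae (hm s hs)
    ((condExp_mul_of_stronglyMeasurable_left hg hgW hW).mono fun _ h _ => h.symm)

theorem setIntegral_sub_condExp_eq_zero_of_condExp_mul_indicator [IsFiniteMeasure μ]
    (hm : m ≤ mΩ) {F : Ω → ℝ} (hF : Integrable F μ) {t : Set Ω} (ht : MeasurableSet t)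
    (hFt : μ[F * t.indicator (fun _ => 1)|m] =ᵐ[μ] μ[F|m] * μ⟦t|m⟧)
    {s : Set Ω} (hs : MeasurableSet[m] s) :
    ∫ ω in t, (F - μ[F|m]) ω ∂μ.restrict s = 0 := by
  have h1t_le : ∀ᵐ ω ∂μ, ‖t.indicator (fun _ => (1 : ℝ)) ω‖ ≤ 1 :=
    ae_of_all _ fun ω => (norm_indicator_le_norm_self _ _).trans norm_one.le
  have h1t_int : Integrable (t.indicator fun _ => (1 : ℝ)) μ := (integrable_const 1).indicator ht
  have hFt_int : Integrable (F * t.indicator fun _ => (1 : ℝ)) μ :=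
    hF.mul_bdd h1t_int.aestronglyMeasurable h1t_le
  have hcFt_int : Integrable (μ[F|m] * t.indicator fun _ => (1 : ℝ)) μ :=
    integrable_condExp.mul_bdd h1t_int.aestronglyMeasurable h1t_le
  calc ∫ ω in t, (F - μ[F|m]) ω ∂μ.restrict s
      = ∫ ω in s, (F * t.indicator fun _ => (1 : ℝ)) ω ∂μ
          - ∫ ω in s, (μ[F|m] * t.indicator fun _ => (1 : ℝ)) ω ∂μ := by
        rw [← integral_sub hFt_int.integrableOn hcFt_int.integrableOn, ← integral_indicator ht]
        congr 1
        funext ω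
        by_cases hω : ω ∈ t <;> simp [hω]
    _ = 0 := by
        rw [← setIntegral_condExp hm hFt_int hs,
          setIntegral_congr_ae (hm s hs) (hFt.mono fun _ h _ => h),
          setIntegral_mul_condExp_of_stronglyMeasurable_left hm stronglyMeasurable_condExp
            hcFt_int h1t_int hs, sub_self]

theorem condExp_mul_ae_eq_of_forall_indicator [IsFiniteMeasure μ] (hm : m ≤ mΩ)
    (hm₂ : m₂ ≤ mΩ) {F : Ω → ℝ} (hF : Integrable F μ)
    (hFt : ∀ t, MeasurableSet[m₂] t →
      μ[F * t.indicator (fun _ => 1)|m] =ᵐ[μ] μ[F|m] * μ⟦t|m⟧)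
    {V : Ω → ℝ} (hV : StronglyMeasurable[m₂] V) {C : ℝ} (hVC : ∀ᵐ ω ∂μ, ‖V ω‖ ≤ C) :
    μ[F * V|m] =ᵐ[μ] μ[F|m] * μ[V|m] := by
  have hV_int : Integrable V μ := .of_bound (hV.mono hm₂).aestronglyMeasurable C hVC
  have hFV_int : Integrable (F * V) μ := hF.mul_bdd hV_int.aestronglyMeasurable hVC
  have hcFV_int : Integrable (μ[F|m] * V) μ :=
    integrable_condExp.mul_bdd hV_int.aestronglyMeasurable hVC
  have hpull : μ[μ[F|m] * V|m] =ᵐ[μ] μ[F|m] * μ[V|m] :=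
    condExp_mul_of_stronglyMeasurable_left stronglyMeasurable_condExp hcFV_int hV_int
  refine (ae_eq_condExp_of_forall_setIntegral_eq hm hFV_int
    (fun s _ _ => (integrable_condExp.congr hpull).integrableOn) (fun s hs _ => ?_)
    (stronglyMeasurable_condExp.mul stronglyMeasurable_condExp).aestronglyMeasurable).symm
  have hVD : ∫ ω in s, V ω * (F - μ[F|m]) ω ∂μ = 0 :=
    integral_mul_eq_zero_of_forall_setIntegral_eq_zero hm₂ (hF.sub integrable_condExp).restrict
      (fun t ht => setIntegral_sub_condExp_eq_zero_of_condExp_mul_indicator hm hF (hm₂ t ht)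
        (hFt t ht) hs) hV (ae_restrict_of_ae hVC)
  rw [setIntegral_mul_condExp_of_stronglyMeasurable_left hm stronglyMeasurable_condExp hcFV_int
    hV_int hs, eq_comm, ← sub_eq_zero, ← integral_sub hFV_int.integrableOn
    hcFV_int.integrableOn, ← hVD]
  congr 1
  funext ω
  simp only [Pi.mul_apply, Pi.sub_apply]
  ring

theorem ProbabilityTheory.CondIndep.condExp_mul_ae_eq [StandardBorelSpace Ω]
    [IsFiniteMeasure μ] {hm : m ≤ mΩ} (hm₁ : m₁ ≤ mΩ) (hm₂ : m₂ ≤ mΩ)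
    (h : CondIndep m m₁ m₂ hm μ) {U V : Ω → ℝ} (hU : StronglyMeasurable[m₁] U)
    (hV : StronglyMeasurable[m₂] V) {C D : ℝ} (hUC : ∀ᵐ ω ∂μ, ‖U ω‖ ≤ C)
    (hVD : ∀ᵐ ω ∂μ, ‖V ω‖ ≤ D) :
    μ[U * V|m] =ᵐ[μ] μ[U|m] * μ[V|m] := by
  have hsets := (condIndep_iff m m₁ m₂ hm hm₁ hm₂ μ).mp h
  have hindicator_mul : ∀ u, MeasurableSet[m₁] u →
      μ[V * u.indicator (fun _ => 1)|m] =ᵐ[μ] μ[V|m] * μ⟦u|m⟧ := by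
    intro u hu
    rw [mul_comm V, mul_comm μ[V|m]]
    refine condExp_mul_ae_eq_of_forall_indicator hm hm₂
      ((integrable_const 1).indicator (hm₁ u hu)) (fun t ht => ?_) hV hVD
    have hinter : (u.indicator fun _ => (1 : ℝ)) * t.indicator (fun _ => 1) =
        (u ∩ t).indicator fun _ => 1 := Set.inter_indicator_one.symm
    rw [hinter]
    exact hsets u t hu ht
  rw [mul_comm U, mul_comm μ[U|m]]
  exact condExp_mul_ae_eq_of_forall_indicator hm hm₁
    (.of_bound (hV.mono hm₂).aestronglyMeasurable D hVD) hindicator_mul hU hUC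

theorem condExp_treated_selected_outcome [StandardBorelSpace Ω] [IsFiniteMeasure μ]
    {hm : m ≤ mΩ} {A S Y Y₁ : Ω → ℝ} (hA : Measurable A) (hAval : ∀ ω, A ω = 0 ∨ A ω = 1)
    (hS : Measurable S) (hSval : ∀ ω, S ω = 0 ∨ S ω = 1) (hY : Measurable Y)
    (hY₁ : Measurable Y₁) {M : ℝ} (hY₁M : ∀ᵐ ω ∂μ, ‖Y₁ ω‖ ≤ M)
    (hAY : ∀ ω, A ω * Y ω = A ω * Y₁ ω)
    (hCI : CondIndep m (.comap Y₁ inferInstance) (.comap A inferInstance) hm μ)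
    (hCIS : CondIndep m (.comap (fun ω => (Y ω, A ω)) inferInstance)
      (.comap S inferInstance) hm μ) :
    μ[fun ω => A ω * S ω * Y ω|m] =ᵐ[μ] μ[Y₁|m] * μ[fun ω => A ω * S ω|m] := by
  have hbinary : ∀ {B : Ω → ℝ}, (∀ ω, B ω = 0 ∨ B ω = 1) → ∀ᵐ ω ∂μ, ‖B ω‖ ≤ 1 :=
    fun hB => ae_of_all _ fun ω => by rcases hB ω with h | h <;> simp [h]
  have hAYM : ∀ᵐ ω ∂μ, ‖A ω * Y ω‖ ≤ M := by
    filter_upwards [hY₁M, hbinary hAval] with ω hY₁ω hAω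
    rw [hAY ω, norm_mul]
    nlinarith [norm_nonneg (A ω), norm_nonneg (Y₁ ω)]
  have hYA := comap_measurable (m := inferInstance) fun ω => (Y ω, A ω)
  have hA_YA : StronglyMeasurable[.comap (fun ω => (Y ω, A ω)) inferInstance] A :=
    (measurable_snd.comp hYA).stronglyMeasurable
  have hY_YA : StronglyMeasurable[.comap (fun ω => (Y ω, A ω)) inferInstance] Y :=
    (measurable_fst.comp hYA).stronglyMeasurable
  have hSm := (comap_measurable (m := inferInstance) S).stronglyMeasurable
  have hAY_S := hCIS.condExp_mul_ae_eq (hY.prodMk hA).comap_le hS.comap_le (hA_YA.mul hY_YA)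
    hSm hAYM (hbinary hSval)
  have hA_S := hCIS.condExp_mul_ae_eq (hY.prodMk hA).comap_le hS.comap_le hA_YA hSm
    (hbinary hAval) (hbinary hSval)
  have hY₁_A := hCI.condExp_mul_ae_eq hY₁.comap_le hA.comap_le
    (comap_measurable Y₁).stronglyMeasurable (comap_measurable A).stronglyMeasurable hY₁M
    (hbinary hAval)
  have hAY' : A * Y = Y₁ * A := funext fun ω => (hAY ω).trans (mul_comm _ _)
  have hASY : (fun ω => A ω * S ω * Y ω) = A * Y * S := funext fun ω => mul_right_comm _ _ _
  rw [hASY, hAY']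
  rw [hAY'] at hAY_S
  change _ =ᵐ[μ] μ[Y₁|m] * μ[A * S|m]
  filter_upwards [hAY_S, hA_S, hY₁_A] with ω h1 h2 h3
  simp only [Pi.mul_apply] at h1 h2 h3 ⊢
  rw [h1, h3, h2, mul_assoc]

end

theorem regression_generalization_identification_general
    {Ω : Type*} [MeasurableSpace Ω] [StandardBorelSpace Ω]
    (μ : Measure Ω) [IsProbabilityMeasure μ]
    {d : ℕ} (A S Y Y₁ Y₀ : Ω → ℝ) (X : Ω → (Fin d → ℝ))
    (μ₁ : (Fin d → ℝ) → ℝ) (c : ℝ)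
    (hA : Measurable A) (hAval : ∀ ω, A ω = 0 ∨ A ω = 1)
    (hS : Measurable S) (hSval : ∀ ω, S ω = 0 ∨ S ω = 1)
    (hY₁ : Measurable Y₁) (hY₀ : Measurable Y₀)
    (hY₁b : ∃ M, ∀ ω, |Y₁ ω| ≤ M)
    (hYdef : ∀ ω, Y ω = A ω * Y₁ ω + (1 - A ω) * Y₀ ω)
    (hX : Measurable X)
    (hCI : CondIndep (MeasurableSpace.comap X inferInstance)
      (MeasurableSpace.comap Y₁ inferInstance)
      (MeasurableSpace.comap A inferInstance)
      hX.comap_le μ)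
    (hCIS : CondIndep (MeasurableSpace.comap X inferInstance)
      (MeasurableSpace.comap (fun ω => (Y ω, A ω)) inferInstance)
      (MeasurableSpace.comap S inferInstance)
      hX.comap_le μ)
    (hc : 0 < c)
    (hASlb : ∀ᵐ ω ∂μ, c ≤ (μ[fun ω' => A ω' * S ω' | MeasurableSpace.comap X inferInstance]) ω)
    (hμ₁ver : (fun ω =>
        μ₁ (X ω) * (μ[fun ω' => A ω' * S ω' | MeasurableSpace.comap X inferInstance]) ω)
      =ᵐ[μ] μ[fun ω' => A ω' * S ω' * Y ω' | MeasurableSpace.comap X inferInstance]) :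
    ∫ ω, μ₁ (X ω) ∂μ = ∫ ω, Y₁ ω ∂μ := by
  obtain ⟨M, hM⟩ := hY₁b
  have hY : Measurable Y := by
    rw [funext hYdef]
    fun_prop
  have hAY : ∀ ω, A ω * Y ω = A ω * Y₁ ω := fun ω => by
    rcases hAval ω with h | h <;> simp [hYdef, h]
  have hident := condExp_treated_selected_outcome hA hAval hS hSval hY hY₁
    (ae_of_all μ fun ω => (Real.norm_eq_abs _).trans_le (hM ω)) hAY hCI hCIS
  have hμ₁X : (fun ω => μ₁ (X ω)) =ᵐ[μ] μ[Y₁|MeasurableSpace.comap X inferInstance] := by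
    filter_upwards [hμ₁ver, hident, hASlb] with ω hver hid hlb
    exact mul_right_cancel₀ (hc.trans_le hlb).ne' (hver.trans hid)
  rw [integral_congr_ae hμ₁X, integral_condExp hX.comap_le]

/-- Regression form of the generalization identification: the conditional mean of Y given X
among treated, validated subjects, averaged over the full covariate distribution, recovers the
target counterfactual mean: E[μ₁(X)] = E[Y₁]. -/
theorem regression_generalization_identification
    {Ω : Type*} [MeasurableSpace Ω] [StandardBorelSpace Ω]
    (μ : Measure Ω) [IsProbabilityMeasure μ]
    {d : ℕ} (A S Y Y₁ Y₀ : Ω → ℝ) (X : Ω → (Fin d → ℝ))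
    (μ₁ : (Fin d → ℝ) → ℝ) (c : ℝ)
    (hA : Measurable A) (hAval : ∀ ω, A ω = 0 ∨ A ω = 1)
    (hS : Measurable S) (hSval : ∀ ω, S ω = 0 ∨ S ω = 1)
    (hY₁ : Measurable Y₁) (hY₀ : Measurable Y₀)
    (hY₁b : ∃ M, ∀ ω, |Y₁ ω| ≤ M) (hY₀b : ∃ M, ∀ ω, |Y₀ ω| ≤ M)
    (hYdef : ∀ ω, Y ω = A ω * Y₁ ω + (1 - A ω) * Y₀ ω)
    (hX : Measurable X)
    (hCI : CondIndep (MeasurableSpace.comap X inferInstance)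
      (MeasurableSpace.comap Y₁ inferInstance)
      (MeasurableSpace.comap A inferInstance)
      hX.comap_le μ)
    (hCIS : CondIndep (MeasurableSpace.comap X inferInstance)
      (MeasurableSpace.comap (fun ω => (Y ω, A ω)) inferInstance)
      (MeasurableSpace.comap S inferInstance)
      hX.comap_le μ)
    (hc : 0 < c)
    (hASlb : ∀ᵐ ω ∂μ, c ≤ (μ[fun ω' => A ω' * S ω' | MeasurableSpace.comap X inferInstance]) ω)
    (hμ₁ : Measurable μ₁) (hμ₁b : ∃ M, ∀ x, |μ₁ x| ≤ M)
    (hμ₁ver : (fun ω =>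
        μ₁ (X ω) * (μ[fun ω' => A ω' * S ω' | MeasurableSpace.comap X inferInstance]) ω)
      =ᵐ[μ] μ[fun ω' => A ω' * S ω' * Y ω' | MeasurableSpace.comap X inferInstance]) :
    ∫ ω, μ₁ (X ω) ∂μ = ∫ ω, Y₁ ω ∂μ :=
  regression_generalization_identification_general μ A S Y Y₁ Y₀ X μ₁ c hA hAval hS hSval hY₁ hY₀
    hY₁b hYdef hX hCI hCIS hc hASlb hμ₁ver
end

section
/- Let (Ω, 𝓕, μ) be a standard Borel probability space. Let A*, S : Ω → ℝ take values in {0,1}, let Y be a bounded real-valued random variable, and let X : Ω → ℝ^d be measurable. Suppose the pair (Y, A*) is conditionally independent of S given σ(X). Let g*, κ : ℝ^d → ℝ be measurable with c ≤ g*(x) ≤ 1 − c and c ≤ κ(x) ≤ 1 for all x, for some 0 < c < 1/2, such that g* ∘ X is a version of E[A* | σ(X)] and κ ∘ X is a version of E[S | σ(X)]. Then E[A*·S·Y / (κ(X)·g*(X))] = E[A*·Y / g*(X)]. (The population equality in Equation (3) ensuring the error-prone validation-data and main-data functionals coincide, so the control variate is mean zero.) -/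
open MeasureTheory ProbabilityTheory

/-!
Write `w := S / (κ(X) g*(X))`. Both sides integrate the bounded `σ(Y, A*)`-measurable function
`A* Y` against a density, `w` and `1 / g*(X)` respectively, so it suffices that these densities
have the same integral over every `σ(Y, A*)`-set `t`. Conditional independence of `σ(Y, A*)` and
`σ(S)` given `σ(X)` gives `E[1_t S h(X)] = E[1_t E[S | X] h(X)]` for bounded measurable `h`, and
`E[S | X] = κ(X)` cancels the `κ` in `w`.
-/

lemma Set.indicator_preimage_one_eq_mul {α M : Type*} [MulZeroOneClass M] [NeZero (1 : M)]
    {f : α → M} (hf : ∀ x, f x = 0 ∨ f x = 1) (g : α → M) : (f ⁻¹' {1}).indicator g = f * g := by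
  ext x
  rcases hf x with h | h <;> simp [h]

lemma Real.norm_inv_le_inv_of_le {a c : ℝ} (hc : 0 < c) (h : c ≤ a) : ‖a⁻¹‖ ≤ c⁻¹ := by
  rw [norm_inv, Real.norm_of_nonneg (hc.le.trans h)]
  exact inv_anti₀ hc h

namespace MeasureTheory

variable {Ω : Type*} {m mΩ : MeasurableSpace Ω} {μ : Measure Ω}

lemma integral_mul_indicator_one {s : Set Ω} (hs : MeasurableSet s) (h : Ω → ℝ) :
    ∫ ω, h ω * s.indicator 1 ω ∂μ = ∫ ω in s, h ω ∂μ := by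
  rw [← integral_indicator hs]
  congr 1 with ω
  by_cases hω : ω ∈ s <;> simp [hω]

variable [IsFiniteMeasure μ]

lemma integral_mul_condExp_of_bound (hm : m ≤ mΩ) {f h : Ω → ℝ} (hf : Integrable f μ)
    (hh : StronglyMeasurable[m] h) {C : ℝ} (hC : ∀ᵐ ω ∂μ, ‖h ω‖ ≤ C) :
    ∫ ω, h ω * μ[f | m] ω ∂μ = ∫ ω, h ω * f ω ∂μ :=
  (integral_congr_ae (condExp_stronglyMeasurable_mul_of_bound hm hh hf C hC)).symm.trans
    (integral_condExp hm)

lemma integral_mul_eq_of_forall_setIntegral_eq (hm : m ≤ mΩ) {f₁ f₂ F : Ω → ℝ}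
    (hf₁ : Integrable f₁ μ) (hf₂ : Integrable f₂ μ)
    (heq : ∀ t, MeasurableSet[m] t → ∫ ω in t, f₁ ω ∂μ = ∫ ω in t, f₂ ω ∂μ)
    (hF : StronglyMeasurable[m] F) {C : ℝ} (hC : ∀ᵐ ω ∂μ, ‖F ω‖ ≤ C) :
    ∫ ω, F ω * f₁ ω ∂μ = ∫ ω, F ω * f₂ ω ∂μ := by
  have hcond : μ[f₁ | m] =ᵐ[μ] μ[f₂ | m] :=
    ae_eq_condExp_of_forall_setIntegral_eq hm hf₂ (fun _ _ _ ↦ integrable_condExp.integrableOn)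
      (fun t ht _ ↦ (setIntegral_condExp hm hf₁ ht).trans (heq t ht))
      stronglyMeasurable_condExp.aestronglyMeasurable
  rw [← integral_mul_condExp_of_bound hm hf₁ hF hC, ← integral_mul_condExp_of_bound hm hf₂ hF hC]
  exact integral_congr_ae (hcond.mono fun ω hω ↦ congrArg (F ω * ·) hω)

end MeasureTheory

namespace ProbabilityTheory

variable {Ω : Type*} {m' m₁ m₂ mΩ : MeasurableSpace Ω} {μ : Measure Ω} {u : Set Ω} {h : Ω → ℝ}
  {C : ℝ}

lemma norm_mul_condExp_indicator_le (hC : ∀ᵐ ω ∂μ, ‖h ω‖ ≤ C) :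
    ∀ᵐ ω ∂μ, ‖h ω * (μ⟦u | m'⟧) ω‖ ≤ C := by
  have hu_le : ∀ᵐ ω ∂μ, |(μ⟦u | m'⟧) ω| ≤ 1 :=
    ae_bdd_abs_condExp_of_ae_bdd_abs (ae_of_all _ fun ω ↦ by by_cases hω : ω ∈ u <;> simp [hω])
  filter_upwards [hC, hu_le] with ω hCω huω
  rw [norm_mul]
  exact (mul_le_of_le_one_right (norm_nonneg _) huω).trans hCω

variable [StandardBorelSpace Ω] [IsFiniteMeasure μ] {hm' : m' ≤ mΩ}

lemma CondIndep.setIntegral_indicator_eq (hm₁ : m₁ ≤ mΩ) (hm₂ : m₂ ≤ mΩ)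
    (hind : CondIndep m' m₁ m₂ hm' μ) {t : Set Ω} (ht : MeasurableSet[m₁] t)
    (hu : MeasurableSet[m₂] u) (hh : StronglyMeasurable[m'] h) (hC : ∀ᵐ ω ∂μ, ‖h ω‖ ≤ C) :
    ∫ ω in t, u.indicator h ω ∂μ = ∫ ω in t, h ω * (μ⟦u | m'⟧) ω ∂μ := by
  have hprod := (condIndep_iff m' m₁ m₂ hm' hm₁ hm₂ μ).mp hind t u ht hu
  have htu : MeasurableSet (t ∩ u) := (hm₁ t ht).inter (hm₂ u hu)
  calc ∫ ω in t, u.indicator h ω ∂μ = ∫ ω, h ω * (t ∩ u).indicator 1 ω ∂μ := by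
        rw [setIntegral_indicator (hm₂ u hu), integral_mul_indicator_one htu]
    _ = ∫ ω, h ω * (μ⟦t ∩ u | m'⟧) ω ∂μ :=
        (integral_mul_condExp_of_bound hm' ((integrable_const 1).indicator htu) hh hC).symm
    _ = ∫ ω, h ω * (μ⟦u | m'⟧) ω * (μ⟦t | m'⟧) ω ∂μ :=
        integral_congr_ae (hprod.mono fun ω hω ↦ by simp only [hω, Pi.mul_apply]; ring)
    _ = ∫ ω, h ω * (μ⟦u | m'⟧) ω * t.indicator 1 ω ∂μ :=
        integral_mul_condExp_of_bound hm' ((integrable_const 1).indicator (hm₁ t ht))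
          (hh.mul stronglyMeasurable_condExp) (norm_mul_condExp_indicator_le hC)
    _ = ∫ ω in t, h ω * (μ⟦u | m'⟧) ω ∂μ := integral_mul_indicator_one (hm₁ t ht) _

lemma CondIndep.integral_mul_indicator_eq (hm₁ : m₁ ≤ mΩ) (hm₂ : m₂ ≤ mΩ)
    (hind : CondIndep m' m₁ m₂ hm' μ) (hu : MeasurableSet[m₂] u)
    (hh : StronglyMeasurable[m'] h) (hC : ∀ᵐ ω ∂μ, ‖h ω‖ ≤ C)
    {F : Ω → ℝ} (hF : StronglyMeasurable[m₁] F) {C' : ℝ} (hC' : ∀ᵐ ω ∂μ, ‖F ω‖ ≤ C') :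
    ∫ ω, F ω * u.indicator h ω ∂μ = ∫ ω, F ω * (h ω * (μ⟦u | m'⟧) ω) ∂μ := by
  have hh_int : Integrable h μ := .of_bound (hh.mono hm').aestronglyMeasurable C hC
  exact integral_mul_eq_of_forall_setIntegral_eq hm₁ (hh_int.indicator (hm₂ u hu))
    (integrable_condExp.bdd_mul (hh.mono hm').aestronglyMeasurable hC)
    (fun t ht ↦ hind.setIntegral_indicator_eq hm₁ hm₂ ht hu hh hC) hF hC'

end ProbabilityTheory

theorem error_prone_functionals_coincide_general
    {Ω : Type*} [MeasurableSpace Ω] [StandardBorelSpace Ω]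
    (μ : Measure Ω) [IsProbabilityMeasure μ]
    {d : ℕ} (Astar S Y : Ω → ℝ) (X : Ω → (Fin d → ℝ))
    (gstar κ : (Fin d → ℝ) → ℝ) (c : ℝ)
    (hAstar : Measurable Astar) (hAstarval : ∀ ω, Astar ω = 0 ∨ Astar ω = 1)
    (hS : Measurable S) (hSval : ∀ ω, S ω = 0 ∨ S ω = 1)
    (hY : Measurable Y) (hYb : ∃ M, ∀ ω, |Y ω| ≤ M)
    (hX : Measurable X) (hg : Measurable gstar) (hκ : Measurable κ)
    (hCIS : CondIndep (MeasurableSpace.comap X inferInstance)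
      (MeasurableSpace.comap (fun ω => (Y ω, Astar ω)) inferInstance)
      (MeasurableSpace.comap S inferInstance)
      hX.comap_le μ)
    (hc : 0 < c)
    (hglb : ∀ x, c ≤ gstar x)
    (hκlb : ∀ x, c ≤ κ x)
    (hκver : (fun ω => κ (X ω)) =ᵐ[μ] μ[S | MeasurableSpace.comap X inferInstance]) :
    ∫ ω, Astar ω * S ω * Y ω / (κ (X ω) * gstar (X ω)) ∂μ
      = ∫ ω, Astar ω * Y ω / gstar (X ω) ∂μ := by
  obtain ⟨M, hM⟩ := hYb
  have hAY_le (ω) : ‖Astar ω * Y ω‖ ≤ M := by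
    rcases hAstarval ω with h | h <;> simp [h, hM ω, (abs_nonneg _).trans (hM ω)]
  have hw_le (x) : ‖(κ x * gstar x)⁻¹‖ ≤ (c * c)⁻¹ := Real.norm_inv_le_inv_of_le (mul_pos hc hc)
    (mul_le_mul (hκlb x) (hglb x) hc.le (hc.le.trans (hκlb x)))
  have hS_indicator := Set.indicator_preimage_one_eq_mul hSval
  have hκB : μ⟦S ⁻¹' {1} | MeasurableSpace.comap X inferInstance⟧ =ᵐ[μ] fun ω ↦ κ (X ω) := by
    rw [(hS_indicator fun _ ↦ 1).trans (mul_one S)]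
    exact hκver.symm
  calc ∫ ω, Astar ω * S ω * Y ω / (κ (X ω) * gstar (X ω)) ∂μ
      = ∫ ω, Astar ω * Y ω * (S ⁻¹' {1}).indicator (fun ω ↦ (κ (X ω) * gstar (X ω))⁻¹) ω ∂μ := by
        congr 1 with ω
        rw [hS_indicator, Pi.mul_apply]
        ring
    _ = ∫ ω, Astar ω * Y ω * ((κ (X ω) * gstar (X ω))⁻¹
          * (μ⟦S ⁻¹' {1} | MeasurableSpace.comap X inferInstance⟧) ω) ∂μ :=
        hCIS.integral_mul_indicator_eq (hY.prodMk hAstar).comap_le hS.comap_le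
          ⟨{1}, measurableSet_singleton 1, rfl⟩
          ((hκ.mul hg).inv.comp (comap_measurable X)).stronglyMeasurable
          (ae_of_all _ (hw_le <| X ·))
          ((measurable_snd.mul measurable_fst).comp (comap_measurable _)).stronglyMeasurable
          (ae_of_all _ hAY_le)
    _ = ∫ ω, Astar ω * Y ω / gstar (X ω) ∂μ := by
        refine integral_congr_ae (hκB.mono fun ω hω ↦ ?_)
        dsimp only at hω ⊢
        rw [hω]
        field_simp [(hc.trans_le (hκlb (X ω))).ne']

/-- Equality of the error-prone validation-data and main-data functionals:
E[A*·S·Y / (κ(X)·g*(X))] = E[A*·Y / g*(X)], ensuring the control variate is mean zero. -/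
theorem error_prone_functionals_coincide
    {Ω : Type*} [MeasurableSpace Ω] [StandardBorelSpace Ω]
    (μ : Measure Ω) [IsProbabilityMeasure μ]
    {d : ℕ} (Astar S Y : Ω → ℝ) (X : Ω → (Fin d → ℝ))
    (gstar κ : (Fin d → ℝ) → ℝ) (c : ℝ)
    (hAstar : Measurable Astar) (hAstarval : ∀ ω, Astar ω = 0 ∨ Astar ω = 1)
    (hS : Measurable S) (hSval : ∀ ω, S ω = 0 ∨ S ω = 1)
    (hY : Measurable Y) (hYb : ∃ M, ∀ ω, |Y ω| ≤ M)
    (hX : Measurable X) (hg : Measurable gstar) (hκ : Measurable κ)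
    (hCIS : CondIndep (MeasurableSpace.comap X inferInstance)
      (MeasurableSpace.comap (fun ω => (Y ω, Astar ω)) inferInstance)
      (MeasurableSpace.comap S inferInstance)
      hX.comap_le μ)
    (hc : 0 < c) (hc2 : c < 1/2)
    (hglb : ∀ x, c ≤ gstar x) (hgub : ∀ x, gstar x ≤ 1 - c)
    (hκlb : ∀ x, c ≤ κ x) (hκub : ∀ x, κ x ≤ 1)
    (hgver : (fun ω => gstar (X ω)) =ᵐ[μ] μ[Astar | MeasurableSpace.comap X inferInstance])
    (hκver : (fun ω => κ (X ω)) =ᵐ[μ] μ[S | MeasurableSpace.comap X inferInstance]) :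
    ∫ ω, Astar ω * S ω * Y ω / (κ (X ω) * gstar (X ω)) ∂μ
      = ∫ ω, Astar ω * Y ω / gstar (X ω) ∂μ :=
  error_prone_functionals_coincide_general μ Astar S Y X gstar κ c hAstar hAstarval hS hSval hY hYb
    hX hg hκ hCIS hc hglb hκlb hκver
end

section
/- Let (Ω, 𝓕, μ) be a standard Borel probability space. Let A, S : Ω → ℝ take values in {0,1}, let Y₁, Y₀ be bounded real-valued random variables, set Y = A·Y₁ + (1 − A)·Y₀, let X : Ω → ℝ^d and A* : Ω → ℝ be measurable, and write Z = (X, A*, Y) : Ω → ℝ^{d+2}. Suppose Y₁ is conditionally independent of A given σ(X), and A is conditionally independent of S given σ(Z) (outcome-dependent validation sampling). Let g : ℝ^d → ℝ and κ : ℝ^{d+2} → ℝ be measurable with c ≤ g(x) ≤ 1 − c and c ≤ κ(z) ≤ 1 for all x, z, for some 0 < c < 1/2, such that g ∘ X is a version of E[A | σ(X)] and κ ∘ Z is a version of E[S | σ(Z)]. Then E[(S/κ(Z)) · (A·Y / g(X))] = E[Y₁]. (The population identification underlying the IPSW estimator τ̂_val^{IPSW} of Theorem 2, part 1.) -/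
open MeasureTheory ProbabilityTheory

/-!
If `U` and a `{0,1}`-valued `V` are conditionally independent given `m`, and `h` is bounded and
`m`-measurable, then `E[U V h] = E[U E[V | m] h]`. For `U` the indicator of a `σ(U)`-set this is
the product rule `P(s ∩ t | m) = P(s | m) P(t | m)` after pulling `h` out of the conditional
expectation; comparing `σ(U)`-conditional expectations extends it to all bounded `U`.

Applied with `m = σ(Z)`, `U = A`, `V = S` and `h = Y / (κ(Z) g(X))`, which is a function of `Z`
because `Y` is a coordinate of `Z`, it replaces `S` by `κ(Z)`. Since `A Y = A Y₁`, applying it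
again with `m = σ(X)`, `U = Y₁`, `V = A` and `h = 1 / g(X)` replaces `A` by `g(X)`, which leaves
`E[Y₁]`.
-/

namespace ProbabilityTheory

variable {Ω : Type*} {m m₁ m₂ : MeasurableSpace Ω} [mΩ : MeasurableSpace Ω] {μ : Measure Ω}

theorem ae_norm_condExp_indicator_le_one (t : Set Ω) :
    ∀ᵐ ω ∂μ, ‖(μ⟦t | m⟧) ω‖ ≤ 1 :=
  ae_bdd_abs_condExp_of_ae_bdd_abs (Filter.Eventually.of_forall fun ω => by
    by_cases hω : ω ∈ t <;> simp [hω])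

variable [IsFiniteMeasure μ]

theorem integral_mul_condExp_of_bound (hm : m ≤ mΩ) {f g : Ω → ℝ}
    (hf : StronglyMeasurable[m] f) (hg : Integrable g μ) (C : ℝ)
    (hfC : ∀ᵐ ω ∂μ, ‖f ω‖ ≤ C) :
    ∫ ω, f ω * μ[g | m] ω ∂μ = ∫ ω, f ω * g ω ∂μ :=
  (integral_congr_ae (condExp_stronglyMeasurable_mul_of_bound hm hf hg C hfC)).symm.trans
    (integral_condExp hm)

variable [StandardBorelSpace Ω]

theorem CondIndep.setIntegral_indicator_mul (hm : m ≤ mΩ) (hm₁ : m₁ ≤ mΩ)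
    (hm₂ : m₂ ≤ mΩ) (hCI : CondIndep m m₁ m₂ hm μ) {s t : Set Ω}
    (hs : MeasurableSet[m₁] s) (ht : MeasurableSet[m₂] t) {h : Ω → ℝ}
    (hh : StronglyMeasurable[m] h) {C : ℝ} (hhC : ∀ᵐ ω ∂μ, ‖h ω‖ ≤ C) :
    ∫ ω in s, t.indicator 1 ω * h ω ∂μ = ∫ ω in s, (μ⟦t | m⟧) ω * h ω ∂μ := by
  have hprod := (condIndep_iff m m₁ m₂ hm hm₁ hm₂ μ).mp hCI s t hs ht
  have hs' : MeasurableSet s := hm₁ s hs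
  have hst : MeasurableSet (s ∩ t) := hs'.inter (hm₂ t ht)
  calc ∫ ω in s, t.indicator 1 ω * h ω ∂μ
      = ∫ ω, h ω * (s ∩ t).indicator (fun _ => (1 : ℝ)) ω ∂μ := by
        rw [← integral_indicator hs']
        congr 1 with ω
        by_cases hωs : ω ∈ s <;> by_cases hωt : ω ∈ t <;> simp [hωs, hωt, mul_comm]
    _ = ∫ ω, h ω * (μ⟦s ∩ t | m⟧) ω ∂μ :=
        (integral_mul_condExp_of_bound hm hh ((integrable_const 1).indicator hst) C hhC).symm
    _ = ∫ ω, (h ω * (μ⟦t | m⟧) ω) * (μ⟦s | m⟧) ω ∂μ := by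
        refine integral_congr_ae ?_
        filter_upwards [hprod] with ω hω
        rw [hω, Pi.mul_apply]
        ring
    _ = ∫ ω, (h ω * (μ⟦t | m⟧) ω) * s.indicator (fun _ => (1 : ℝ)) ω ∂μ := by
        refine integral_mul_condExp_of_bound hm (hh.mul stronglyMeasurable_condExp)
          ((integrable_const 1).indicator hs') (C * 1) ?_
        filter_upwards [hhC, ae_norm_condExp_indicator_le_one t] with ω hhω htω
        rw [norm_mul]
        exact mul_le_mul hhω htω (norm_nonneg _) ((norm_nonneg _).trans hhω)
    _ = ∫ ω in s, (μ⟦t | m⟧) ω * h ω ∂μ := by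
        rw [← integral_indicator hs']
        congr 1 with ω
        by_cases hωs : ω ∈ s <;> simp [hωs, mul_comm]

theorem CondIndep.integral_mul_indicator_mul (hm : m ≤ mΩ) (hm₁ : m₁ ≤ mΩ)
    (hm₂ : m₂ ≤ mΩ) (hCI : CondIndep m m₁ m₂ hm μ) {U h : Ω → ℝ} {t : Set Ω}
    (hU : StronglyMeasurable[m₁] U) {C₁ : ℝ} (hUC : ∀ᵐ ω ∂μ, ‖U ω‖ ≤ C₁)
    (ht : MeasurableSet[m₂] t) (hh : StronglyMeasurable[m] h) {C : ℝ}
    (hhC : ∀ᵐ ω ∂μ, ‖h ω‖ ≤ C) :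
    ∫ ω, U ω * (t.indicator 1 ω * h ω) ∂μ = ∫ ω, U ω * ((μ⟦t | m⟧) ω * h ω) ∂μ := by
  have hh' : Integrable h μ :=
    Integrable.of_bound (hh.mono hm).aestronglyMeasurable C hhC
  have hth : Integrable (fun ω => t.indicator 1 ω * h ω) μ :=
    (hh'.indicator (hm₂ t ht)).congr (Filter.Eventually.of_forall fun ω => by
      by_cases hω : ω ∈ t <;> simp [hω])
  have hPh : Integrable (fun ω => (μ⟦t | m⟧) ω * h ω) μ :=
    hh'.bdd_mul (stronglyMeasurable_condExp.mono hm).aestronglyMeasurable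
      (ae_norm_condExp_indicator_le_one t)
  have hcond :
      μ[fun ω => (μ⟦t | m⟧) ω * h ω | m₁] =ᵐ[μ] μ[fun ω => t.indicator 1 ω * h ω | m₁] :=
    ae_eq_condExp_of_forall_setIntegral_eq hm₁ hth (fun s _ _ => integrable_condExp.integrableOn)
      (fun s hs _ => by
        rw [setIntegral_condExp hm₁ hPh hs]
        exact (hCI.setIntegral_indicator_mul hm hm₁ hm₂ hs ht hh hhC).symm)
      stronglyMeasurable_condExp.aestronglyMeasurable
  calc ∫ ω, U ω * (t.indicator 1 ω * h ω) ∂μ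
      = ∫ ω, U ω * μ[fun ω => t.indicator 1 ω * h ω | m₁] ω ∂μ :=
        (integral_mul_condExp_of_bound hm₁ hU hth C₁ hUC).symm
    _ = ∫ ω, U ω * μ[fun ω => (μ⟦t | m⟧) ω * h ω | m₁] ω ∂μ :=
        integral_congr_ae (hcond.symm.mono fun ω hω => congrArg (U ω * ·) hω)
    _ = ∫ ω, U ω * ((μ⟦t | m⟧) ω * h ω) ∂μ :=
        integral_mul_condExp_of_bound hm₁ hU hPh C₁ hUC

theorem CondIndep.integral_mul_mul_eq_of_ae_eq_condExp (hm : m ≤ mΩ) (hm₁ : m₁ ≤ mΩ)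
    (hm₂ : m₂ ≤ mΩ) (hCI : CondIndep m m₁ m₂ hm μ) {U V h v : Ω → ℝ}
    (hU : StronglyMeasurable[m₁] U) {C₁ : ℝ} (hUC : ∀ᵐ ω ∂μ, ‖U ω‖ ≤ C₁)
    (hV : Measurable[m₂] V) (hV01 : ∀ ω, V ω = 0 ∨ V ω = 1)
    (hh : StronglyMeasurable[m] h) {C : ℝ} (hhC : ∀ᵐ ω ∂μ, ‖h ω‖ ≤ C)
    (hv : v =ᵐ[μ] μ[V | m]) :
    ∫ ω, U ω * (V ω * h ω) ∂μ = ∫ ω, U ω * (v ω * h ω) ∂μ := by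
  have hV_eq : V = (V ⁻¹' {1}).indicator 1 := by
    funext ω
    rcases hV01 ω with hω | hω <;> simp [hω]
  rw [hV_eq] at hv ⊢
  refine (hCI.integral_mul_indicator_mul hm hm₁ hm₂ hU hUC
    (hV (measurableSet_singleton 1)) hh hhC).trans (integral_congr_ae ?_)
  filter_upwards [hv] with ω hω
  rw [hω]
  rfl

end ProbabilityTheory

theorem ipsw_outcome_dependent_identification_general
    {Ω : Type*} [MeasurableSpace Ω] [StandardBorelSpace Ω]
    (μ : Measure Ω) [IsProbabilityMeasure μ]
    {d : ℕ} (A S Y Y₁ Y₀ Astar : Ω → ℝ) (X : Ω → (Fin d → ℝ))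
    (Z : Ω → (Fin d → ℝ) × ℝ × ℝ)
    (g : (Fin d → ℝ) → ℝ) (κ : (Fin d → ℝ) × ℝ × ℝ → ℝ) (c : ℝ)
    (hA : Measurable A) (hAval : ∀ ω, A ω = 0 ∨ A ω = 1)
    (hS : Measurable S) (hSval : ∀ ω, S ω = 0 ∨ S ω = 1)
    (hY₁ : Measurable Y₁)
    (hY₁b : ∃ M, ∀ ω, |Y₁ ω| ≤ M) (hY₀b : ∃ M, ∀ ω, |Y₀ ω| ≤ M)
    (hYdef : ∀ ω, Y ω = A ω * Y₁ ω + (1 - A ω) * Y₀ ω)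
    (hX : Measurable X)
    (hZdef : ∀ ω, Z ω = (X ω, Astar ω, Y ω)) (hZ : Measurable Z)
    (hg : Measurable g) (hκ : Measurable κ)
    (hCI : CondIndep (MeasurableSpace.comap X inferInstance)
      (MeasurableSpace.comap Y₁ inferInstance)
      (MeasurableSpace.comap A inferInstance)
      hX.comap_le μ)
    (hCIS : CondIndep (MeasurableSpace.comap Z inferInstance)
      (MeasurableSpace.comap A inferInstance)
      (MeasurableSpace.comap S inferInstance)
      hZ.comap_le μ)
    (hc : 0 < c)
    (hglb : ∀ x, c ≤ g x)
    (hκlb : ∀ z, c ≤ κ z)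
    (hgver : (fun ω => g (X ω)) =ᵐ[μ] μ[A | MeasurableSpace.comap X inferInstance])
    (hκver : (fun ω => κ (Z ω)) =ᵐ[μ] μ[S | MeasurableSpace.comap Z inferInstance]) :
    ∫ ω, (S ω / κ (Z ω)) * (A ω * Y ω / g (X ω)) ∂μ = ∫ ω, Y₁ ω ∂μ := by
  obtain ⟨M₁, hM₁⟩ := hY₁b
  obtain ⟨M₀, hM₀⟩ := hY₀b
  have hgpos (x) : 0 < g x := hc.trans_le (hglb x)
  have hκpos (z) : 0 < κ z := hc.trans_le (hκlb z)
  have hAY (ω) : A ω * Y ω = A ω * Y₁ ω := by rcases hAval ω with h | h <;> simp [hYdef, h]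
  have hY_le (ω) : |Y ω| ≤ max M₁ M₀ := by rcases hAval ω with h | h <;> simp [hYdef, h, hM₁, hM₀]
  let w : (Fin d → ℝ) × ℝ × ℝ → ℝ := fun z => z.2.2 / (κ z * g z.1)
  have hw (ω) : w (Z ω) = Y ω / (κ (Z ω) * g (X ω)) := by simp [w, hZdef]
  have hw_le (ω) : ‖w (Z ω)‖ ≤ max M₁ M₀ / (c * c) := by
    rw [hw, norm_div, Real.norm_eq_abs, Real.norm_of_nonneg (mul_pos (hκpos _) (hgpos _)).le]
    exact div_le_div₀ ((abs_nonneg _).trans (hY_le ω)) (hY_le ω) (by positivity)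
      (mul_le_mul (hκlb _) (hglb _) hc.le (hκpos _).le)
  have hA_le (ω) : ‖A ω‖ ≤ 1 := by rcases hAval ω with h | h <;> simp [h]
  have hginv_le (ω) : ‖(g (X ω))⁻¹‖ ≤ c⁻¹ := by
    rw [norm_inv, Real.norm_of_nonneg (hgpos _).le]
    exact inv_anti₀ hc (hglb _)
  have hS_switch := hCIS.integral_mul_mul_eq_of_ae_eq_condExp hZ.comap_le hA.comap_le hS.comap_le
    (comap_measurable A).stronglyMeasurable (.of_forall hA_le) (comap_measurable S) hSval
    ((by fun_prop : Measurable w).comp (comap_measurable Z)).stronglyMeasurable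
    (.of_forall hw_le) hκver
  have hA_switch := hCI.integral_mul_mul_eq_of_ae_eq_condExp hX.comap_le hY₁.comap_le hA.comap_le
    (comap_measurable Y₁).stronglyMeasurable (.of_forall hM₁) (comap_measurable A) hAval
    (hg.comp (comap_measurable X)).inv.stronglyMeasurable (.of_forall hginv_le) hgver
  calc ∫ ω, (S ω / κ (Z ω)) * (A ω * Y ω / g (X ω)) ∂μ
      = ∫ ω, A ω * (S ω * w (Z ω)) ∂μ := by
        congr 1 with ω
        rw [hw]
        field_simp [(hκpos (Z ω)).ne', (hgpos (X ω)).ne']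
    _ = ∫ ω, A ω * (κ (Z ω) * w (Z ω)) ∂μ := hS_switch
    _ = ∫ ω, Y₁ ω * (A ω * (g (X ω))⁻¹) ∂μ := by
        congr 1 with ω
        rw [hw, mul_div_assoc', mul_div_mul_left _ _ (hκpos _).ne', mul_div_assoc', hAY]
        ring
    _ = ∫ ω, Y₁ ω * (g (X ω) * (g (X ω))⁻¹) ∂μ := hA_switch
    _ = ∫ ω, Y₁ ω ∂μ := by
        congr 1 with ω
        rw [mul_inv_cancel₀ (hgpos _).ne', mul_one]

/-- Population identification underlying the IPSW estimator under outcome-dependent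
validation sampling: E[(S/κ(Z)) · (A·Y / g(X))] = E[Y₁], where Z = (X, A*, Y). -/
theorem ipsw_outcome_dependent_identification
    {Ω : Type*} [MeasurableSpace Ω] [StandardBorelSpace Ω]
    (μ : Measure Ω) [IsProbabilityMeasure μ]
    {d : ℕ} (A S Y Y₁ Y₀ Astar : Ω → ℝ) (X : Ω → (Fin d → ℝ))
    (Z : Ω → (Fin d → ℝ) × ℝ × ℝ)
    (g : (Fin d → ℝ) → ℝ) (κ : (Fin d → ℝ) × ℝ × ℝ → ℝ) (c : ℝ)
    (hA : Measurable A) (hAval : ∀ ω, A ω = 0 ∨ A ω = 1)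
    (hS : Measurable S) (hSval : ∀ ω, S ω = 0 ∨ S ω = 1)
    (hY₁ : Measurable Y₁) (hY₀ : Measurable Y₀)
    (hY₁b : ∃ M, ∀ ω, |Y₁ ω| ≤ M) (hY₀b : ∃ M, ∀ ω, |Y₀ ω| ≤ M)
    (hYdef : ∀ ω, Y ω = A ω * Y₁ ω + (1 - A ω) * Y₀ ω)
    (hX : Measurable X) (hAstar : Measurable Astar)
    (hZdef : ∀ ω, Z ω = (X ω, Astar ω, Y ω)) (hZ : Measurable Z)
    (hg : Measurable g) (hκ : Measurable κ)
    (hCI : CondIndep (MeasurableSpace.comap X inferInstance)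
      (MeasurableSpace.comap Y₁ inferInstance)
      (MeasurableSpace.comap A inferInstance)
      hX.comap_le μ)
    (hCIS : CondIndep (MeasurableSpace.comap Z inferInstance)
      (MeasurableSpace.comap A inferInstance)
      (MeasurableSpace.comap S inferInstance)
      hZ.comap_le μ)
    (hc : 0 < c) (hc2 : c < 1/2)
    (hglb : ∀ x, c ≤ g x) (hgub : ∀ x, g x ≤ 1 - c)
    (hκlb : ∀ z, c ≤ κ z) (hκub : ∀ z, κ z ≤ 1)
    (hgver : (fun ω => g (X ω)) =ᵐ[μ] μ[A | MeasurableSpace.comap X inferInstance])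
    (hκver : (fun ω => κ (Z ω)) =ᵐ[μ] μ[S | MeasurableSpace.comap Z inferInstance]) :
    ∫ ω, (S ω / κ (Z ω)) * (A ω * Y ω / g (X ω)) ∂μ = ∫ ω, Y₁ ω ∂μ :=
  ipsw_outcome_dependent_identification_general μ A S Y Y₁ Y₀ Astar X Z g κ c hA hAval hS hSval hY₁
    hY₁b hY₀b hYdef hX hZdef hZ hg hκ hCI hCIS hc hglb hκlb hgver hκver
end
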